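/- arXiv:1806.04369 — 5 statements merged into one kernel-verified Lean document; each statement's English description precedes it below -/
import Mathlib

section
/- Let p be an odd prime and let G be a finite p-group which is metacyclic, i.e. G possesses a cyclic normal subgroup N such that the quotient G/N is cyclic. Then G admits an exact bicyclic factorisation: there exist elements α, β ∈ G such that ⟨α⟩ ∩ ⟨β⟩ = 1 and G = ⟨α⟩⟨β⟩ (every element of G is a product of a power of α and a power of β). -/
open Subgroup

/-- Geometric sum `1 + ρ + ⋯ + ρ^(k-1)` defined by recursion. -/
def Sgeo (ρ : ℤ) : ℕ → ℤ
  | 0 => 0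
  | k+1 => Sgeo ρ k * ρ + 1

lemma Sgeo_add (ρ : ℤ) (m n : ℕ) : Sgeo ρ (m + n) = Sgeo ρ m * ρ ^ n + Sgeo ρ n := by
  induction n with
  | zero => simp [Sgeo]
  | succ n ih => rw [← Nat.add_assoc]; simp only [Sgeo, ih]; ring

lemma Sgeo_mul (ρ : ℤ) (a b : ℕ) : Sgeo ρ (a * b) = Sgeo ρ a * Sgeo (ρ ^ a) b := by
  induction b with
  | zero => simp [Sgeo]
  | succ b ih => rw [Nat.mul_succ, Sgeo_add, ih]; simp only [Sgeo]; ring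

/-- Triangular numbers. -/
def Tri : ℕ → ℤ
  | 0 => 0
  | k+1 => Tri k + k

lemma two_tri (k : ℕ) : 2 * Tri k = k * (k - 1) := by
  induction k with
  | zero => simp [Tri]
  | succ k ih => simp only [Tri]; push_cast; push_cast at ih; ring_nf; ring_nf at ih; omega

lemma Sgeo_linear (q e : ℤ) (k : ℕ) : ∃ E, Sgeo (1 + q * e) k = k + q * e * Tri k + q ^ 2 * E := by
  induction k with
  | zero => exact ⟨0, by simp [Sgeo, Tri]⟩
  | succ k ih =>
    obtain ⟨E, hE⟩ := ih
    exact ⟨E * (1 + q * e) + e ^ 2 * Tri k, by simp only [Sgeo, Tri, hE]; push_cast; ring⟩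

lemma Sgeo_prime {p : ℕ} (hp : p.Prime) (hodd : Odd p) {ρ : ℤ} (h : (p : ℤ) ∣ ρ - 1) :
    ∃ B, Sgeo ρ p = p + (p : ℤ) ^ 2 * B := by
  obtain ⟨e, he⟩ := h
  have hρ : ρ = 1 + (p : ℤ) * e := by linarith
  obtain ⟨E, hE⟩ := Sgeo_linear (p : ℤ) e p
  have hptri : (p : ℤ) ∣ Tri p := by
    have h2 : (2 : ℤ) * Tri p = (p : ℤ) * ((p : ℤ) - 1) := two_tri p
    have hp2 : ¬ (p : ℤ) ∣ 2 := by
      intro hd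
      have h1 : p ∣ 2 := by exact_mod_cast hd
      have h3 := Nat.le_of_dvd (by norm_num) h1
      have h4 := hp.two_le
      have h5 : p = 2 := le_antisymm h3 h4
      rw [h5, Nat.odd_iff] at hodd
      omega
    have hdd : (p : ℤ) ∣ 2 * Tri p := h2 ▸ Dvd.intro _ rfl
    exact ((Nat.prime_iff_prime_int.mp hp).dvd_mul.mp hdd).resolve_left hp2
  obtain ⟨T, hT⟩ := hptri
  exact ⟨e * T + E, by rw [← hρ] at hE; rw [hE, hT]; ring⟩

lemma Sgeo_pow {p : ℕ} (hp : p.Prime) (hodd : Odd p) {ρ : ℤ} (h : (p : ℤ) ∣ ρ - 1) (k : ℕ) :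
    ∃ A, Sgeo ρ (p ^ k) = (p : ℤ) ^ k + (p : ℤ) ^ (k + 1) * A := by
  induction k with
  | zero => exact ⟨0, by simp [Sgeo]⟩
  | succ k ih =>
    obtain ⟨A, hA⟩ := ih
    have hpow : (p : ℤ) ∣ ρ ^ (p ^ k) - 1 :=
      h.trans (by simpa using sub_dvd_pow_sub_pow ρ 1 (p ^ k))
    obtain ⟨B, hB⟩ := Sgeo_prime hp hodd hpow
    refine ⟨A + B + p * A * B, ?_⟩
    have hsplit : (p : ℕ) ^ (k + 1) = p ^ k * p := by ring
    rw [hsplit, Sgeo_mul, hA, hB]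
    push_cast
    ring

/-- Solving a linear congruence with coprime data. -/
lemma dvd_solve {a b : ℤ} (h : IsCoprime a b) (c : ℤ) : ∃ x, a ∣ b * x - c := by
  obtain ⟨u, v, huv⟩ := h
  exact ⟨v * c, ⟨-(c * u), by linear_combination c * huv⟩⟩

lemma prime_pow_coprime {p : ℕ} (hp : p.Prime) (k : ℕ) {u : ℤ} (hu : ¬ (p : ℤ) ∣ u) :
    IsCoprime ((p : ℤ) ^ k) u :=
  IsCoprime.pow_left ((Nat.prime_iff_prime_int.mp hp).coprime_iff_not_dvd.mpr hu)

lemma not_dvd_one_add {p : ℕ} (hp : p.Prime) (A : ℤ) : ¬ (p : ℤ) ∣ 1 + (p : ℤ) * A := by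
  intro h
  have h1 : (p : ℤ) ∣ (p : ℤ) * A := Dvd.intro A rfl
  have h2 : (p : ℤ) ∣ 1 := by
    have := dvd_sub h h1
    simpa using this
  have := Int.le_of_dvd one_pos h2
  have := hp.two_le
  omega

section GroupHelpers
variable {G : Type*} [Group G]

lemma conj_zpow' (g x : G) (z : ℤ) : g⁻¹ * x ^ z * g = (g⁻¹ * x * g) ^ z := by
  have := conj_zpow (i := z) (a := g⁻¹) (b := x)
  simpa using this.symm

lemma conj_base {b a : G} {r : ℤ} (h : b⁻¹ * a * b = a ^ r) (z : ℤ) :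
    b⁻¹ * a ^ z * b = a ^ (r * z) := by
  rw [conj_zpow', h, ← zpow_mul, mul_comm]

lemma conj_iter {b a : G} {r : ℤ} (h : b⁻¹ * a * b = a ^ r) (c : ℕ) (z : ℤ) :
    (b ^ c)⁻¹ * a ^ z * b ^ c = a ^ (r ^ c * z) := by
  induction c generalizing z with
  | zero => simp
  | succ c ih =>
    rw [pow_succ, mul_inv_rev]
    calc b⁻¹ * (b ^ c)⁻¹ * a ^ z * (b ^ c * b)
        = b⁻¹ * ((b ^ c)⁻¹ * a ^ z * b ^ c) * b := by group
      _ = b⁻¹ * a ^ (r ^ c * z) * b := by rw [ih]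
      _ = a ^ (r * (r ^ c * z)) := conj_base h _
      _ = a ^ (r ^ (c + 1) * z) := by rw [← mul_assoc, ← pow_succ']

lemma key_pow {b a : G} {r : ℤ} (h : b⁻¹ * a * b = a ^ r) (c : ℕ) (y : ℤ) (k : ℕ) :
    (b ^ c * a ^ y) ^ k = b ^ (c * k) * a ^ (y * Sgeo (r ^ c) k) := by
  induction k with
  | zero => simp [Sgeo]
  | succ k ih =>
    rw [pow_succ, ih]
    have hc : a ^ (y * Sgeo (r ^ c) k) * b ^ c = b ^ c * a ^ (r ^ c * (y * Sgeo (r ^ c) k)) := by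
      rw [← conj_iter h c]; group
    calc b ^ (c * k) * a ^ (y * Sgeo (r ^ c) k) * (b ^ c * a ^ y)
        = b ^ (c * k) * (a ^ (y * Sgeo (r ^ c) k) * b ^ c) * a ^ y := by group
      _ = b ^ (c * k) * (b ^ c * a ^ (r ^ c * (y * Sgeo (r ^ c) k))) * a ^ y := by rw [hc]
      _ = b ^ (c * k + c) * (a ^ (r ^ c * (y * Sgeo (r ^ c) k)) * a ^ y) := by
            rw [pow_add]; group
      _ = b ^ (c * (k + 1)) * a ^ (y * Sgeo (r ^ c) (k + 1)) := by
            rw [← zpow_add, Nat.mul_succ]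
            congr 1
            simp only [Sgeo]
            ring

lemma swap_eq {a b c d : G} (h : a * b = c * d) : c⁻¹ * a = d * b⁻¹ :=
  calc c⁻¹ * a = c⁻¹ * (a * b) * b⁻¹ := by group
    _ = c⁻¹ * (c * d) * b⁻¹ := by rw [h]
    _ = d * b⁻¹ := by group

lemma exact_fact [Finite G] (α β : G)
    (h1 : zpowers α ⊓ zpowers β = ⊥)
    (h2 : orderOf α * orderOf β = Nat.card G) :
    ∀ g : G, ∃ i j : ℤ, g = α ^ i * β ^ j := by
  have hα : 0 < orderOf α := orderOf_pos α
  have hβ : 0 < orderOf β := orderOf_pos β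
  haveI : NeZero (orderOf α) := ⟨hα.ne'⟩
  haveI : NeZero (orderOf β) := ⟨hβ.ne'⟩
  set f : ZMod (orderOf α) × ZMod (orderOf β) → G :=
    fun x => α ^ (x.1.val : ℤ) * β ^ (x.2.val : ℤ) with hf
  have hinj : Function.Injective f := by
    rintro ⟨i, j⟩ ⟨i', j'⟩ hij
    simp only [hf] at hij
    have key : α ^ ((i.val : ℤ) - (i'.val : ℤ)) = β ^ ((j'.val : ℤ) - (j.val : ℤ)) := by
      rw [sub_eq_neg_add, zpow_add, zpow_neg, zpow_sub]
      exact swap_eq hij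
    have hmem : α ^ ((i.val : ℤ) - (i'.val : ℤ)) ∈ zpowers α ⊓ zpowers β :=
      ⟨zpow_mem (mem_zpowers α) _, key ▸ zpow_mem (mem_zpowers β) _⟩
    rw [h1, mem_bot] at hmem
    have h2' : β ^ ((j'.val : ℤ) - (j.val : ℤ)) = 1 := key ▸ hmem
    have d1 : (orderOf α : ℤ) ∣ (i.val : ℤ) - (i'.val : ℤ) :=
      orderOf_dvd_iff_zpow_eq_one.mpr hmem
    have d2 : (orderOf β : ℤ) ∣ (j'.val : ℤ) - (j.val : ℤ) :=
      orderOf_dvd_iff_zpow_eq_one.mpr h2'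
    have e1 : i = i' := by
      have h : ((i.val : ℤ) : ZMod (orderOf α)) = ((i'.val : ℤ) : ZMod (orderOf α)) :=
        (ZMod.intCast_eq_intCast_iff _ _ _).mpr
          (Int.ModEq.symm (Int.modEq_iff_dvd.mpr (by simpa using d1)))
      push_cast at h
      rwa [ZMod.natCast_rightInverse i, ZMod.natCast_rightInverse i'] at h
    have e2 : j = j' := by
      have h : ((j'.val : ℤ) : ZMod (orderOf β)) = ((j.val : ℤ) : ZMod (orderOf β)) :=
        (ZMod.intCast_eq_intCast_iff _ _ _).mpr
          (Int.ModEq.symm (Int.modEq_iff_dvd.mpr (by simpa using d2)))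
      push_cast at h
      rw [ZMod.natCast_rightInverse j, ZMod.natCast_rightInverse j'] at h
      exact h.symm
    rw [e1, e2]
  have hcard : Nat.card (ZMod (orderOf α) × ZMod (orderOf β)) = Nat.card G := by
    rw [Nat.card_prod, Nat.card_zmod, Nat.card_zmod, h2]
  have hbij : Function.Bijective f := (Nat.bijective_iff_injective_and_card f).mpr ⟨hinj, hcard⟩
  intro g
  obtain ⟨x, hx⟩ := hbij.2 g
  exact ⟨x.1.val, x.2.val, hx.symm⟩

end GroupHelpers

/-- Let `p` be an odd prime and `G` a finite metacyclic `p`-group, i.e. `G`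
has a cyclic normal subgroup `N` with `G ⧸ N` cyclic. Then `G` admits an exact bicyclic
factorisation: there are `α, β ∈ G` with `⟨α⟩ ∩ ⟨β⟩ = 1` and `G = ⟨α⟩⟨β⟩`. -/
theorem stmt_0 (p : ℕ) (hp : p.Prime) (hodd : Odd p)
    (G : Type*) [Group G] [Finite G] (hG : IsPGroup p G)
    (N : Subgroup G) (hN : N.Normal) (hNcyc : IsCyclic N) (hQcyc : IsCyclic (G ⧸ N)) :
    ∃ α β : G, Subgroup.zpowers α ⊓ Subgroup.zpowers β = ⊥ ∧
      ∀ g : G, ∃ i j : ℤ, g = α ^ i * β ^ j := by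
  classical
  haveI : Fact p.Prime := ⟨hp⟩
  by_cases hGc : IsCyclic G
  · obtain ⟨γ, hγ⟩ := hGc.exists_generator
    refine ⟨γ, 1, by simp [Subgroup.zpowers_one_eq_bot], fun g => ?_⟩
    obtain ⟨i, hi⟩ := Subgroup.mem_zpowers_iff.mp (hγ g)
    exact ⟨i, 0, by rw [← hi, zpow_zero, mul_one]⟩
  obtain ⟨gN, hgN⟩ := hNcyc.exists_generator
  set a : G := (gN : G) with ha_def
  have haNmem : a ∈ N := gN.2
  have haN : zpowers a = N := by
    apply le_antisymm
    · exact (zpowers_le).mpr haNmem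
    · intro x hx
      obtain ⟨k, hk⟩ := Subgroup.mem_zpowers_iff.mp (hgN ⟨x, hx⟩)
      exact Subgroup.mem_zpowers_iff.mpr ⟨k, by simpa using congrArg Subtype.val hk⟩
  obtain ⟨m, hm⟩ := (hG.to_subgroup N).exists_card_eq
  have ham : orderOf a = p ^ m := by rw [← Nat.card_zpowers, haN, hm]
  obtain ⟨bq, hbq⟩ := hQcyc.exists_generator
  obtain ⟨b, hb⟩ := QuotientGroup.mk'_surjective N bq
  obtain ⟨n, hn⟩ := (hG.to_quotient N).exists_card_eq
  have hbqn : orderOf bq = p ^ n := by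
    rw [orderOf_eq_card_of_forall_mem_zpowers hbq, hn]
  have cardG : Nat.card G = p ^ n * p ^ m := by
    rw [Subgroup.card_eq_card_quotient_mul_card_subgroup N, hn, hm]
  have hm1 : 1 ≤ m := by
    rcases Nat.eq_zero_or_pos m with h0 | h
    · exfalso
      have hNbot : N = ⊥ := Subgroup.card_eq_one.mp (by rw [hm, h0, pow_zero])
      subst hNbot
      haveI := hQcyc
      exact hGc (isCyclic_of_surjective (QuotientGroup.quotientBot (G := G)).toMonoidHom
        (QuotientGroup.quotientBot (G := G)).surjective)
    · exact h
  have hrmem : b⁻¹ * a * b ∈ zpowers a := by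
    rw [haN]
    have := hN.conj_mem a haNmem b⁻¹
    simpa using this
  obtain ⟨r, hr⟩ := Subgroup.mem_zpowers_iff.mp hrmem
  have hconj : b⁻¹ * a * b = a ^ r := hr.symm
  have hbN : b ^ (p ^ n) ∈ N := by
    have h1 : (QuotientGroup.mk' N) (b ^ (p ^ n)) = 1 := by
      rw [map_pow, hb, ← hbqn, pow_orderOf_eq_one]
    exact (QuotientGroup.eq_one_iff _).mp h1
  obtain ⟨t, ht⟩ := Subgroup.mem_zpowers_iff.mp (haN ▸ hbN)
  have haz : ∀ z : ℤ, a ^ z = 1 ↔ (p : ℤ) ^ m ∣ z := by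
    intro z
    rw [← orderOf_dvd_iff_zpow_eq_one, ham, Nat.cast_pow]
  have hbqz : ∀ z : ℤ, bq ^ z = 1 ↔ (p : ℤ) ^ n ∣ z := by
    intro z
    rw [← orderOf_dvd_iff_zpow_eq_one, hbqn, Nat.cast_pow]
  have haq : (QuotientGroup.mk' N) a = 1 := (QuotientGroup.eq_one_iff a).mpr haNmem
  have hrpn : (p : ℤ) ^ m ∣ r ^ (p ^ n) - 1 := by
    have h1 : (b ^ (p ^ n))⁻¹ * a ^ (1 : ℤ) * b ^ (p ^ n) = a ^ (r ^ (p ^ n) * 1) :=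
      conj_iter hconj _ _
    rw [← ht] at h1
    have h2 : (a ^ t)⁻¹ * a ^ (1 : ℤ) * a ^ t = a ^ (1 : ℤ) := by group
    rw [h2] at h1
    have h3 : a ^ (r ^ (p ^ n) * 1 - 1) = 1 := by rw [zpow_sub, ← h1]; group
    simpa using (haz _).mp h3
  have hr1 : (p : ℤ) ∣ r - 1 := by
    have hpm : (p : ℤ) ∣ r ^ (p ^ n) - 1 :=
      (dvd_pow_self (p : ℤ) (by omega : m ≠ 0)).trans hrpn
    have hz : ((r : ZMod p)) ^ (p ^ n) = 1 := by
      have h0 : (((r ^ (p ^ n) - 1 : ℤ)) : ZMod p) = 0 :=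
        (ZMod.intCast_zmod_eq_zero_iff_dvd _ _).mpr hpm
      push_cast at h0
      exact sub_eq_zero.mp h0
    have hfrob : ∀ (k : ℕ) (x : ZMod p), x ^ (p ^ k) = x := by
      intro k
      induction k with
      | zero => intro x; simp
      | succ k ih => intro x; rw [pow_succ, pow_mul, ih, ZMod.pow_card]
    have hone : (r : ZMod p) = 1 := by rw [← hfrob n (r : ZMod p), hz]
    have h0 : ((r - 1 : ℤ) : ZMod p) = 0 := by push_cast; rw [hone]; ring
    exact (ZMod.intCast_zmod_eq_zero_iff_dvd _ _).mp h0
  by_cases hty : (p : ℤ) ^ (min n m) ∣ t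
  · -- CASE A : p^min(n,m) divides t
    obtain ⟨A, hA⟩ := Sgeo_pow hp hodd hr1 n
    have hx : ∃ x : ℤ, (p : ℤ) ^ m ∣ t + x * Sgeo r (p ^ n) := by
      rcases le_or_gt m n with hmn | hnm
      · refine ⟨0, ?_⟩
        have h1 : (p : ℤ) ^ m ∣ t := by rwa [min_eq_right hmn] at hty
        simpa using h1
      · have ht' : (p : ℤ) ^ n ∣ t := by rwa [min_eq_left hnm.le] at hty
        obtain ⟨t₀, ht₀⟩ := ht'
        obtain ⟨x, hx⟩ := dvd_solve (prime_pow_coprime hp (m - n) (not_dvd_one_add hp A)) (-t₀)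
        refine ⟨x, ?_⟩
        have he : t + x * Sgeo r (p ^ n) = (p : ℤ) ^ n * ((1 + p * A) * x - (-t₀)) := by
          rw [hA, ht₀]; ring
        rw [he, show (p : ℤ) ^ m = (p : ℤ) ^ n * (p : ℤ) ^ (m - n) from by
          rw [← pow_add]; congr 1; omega]
        exact mul_dvd_mul_left _ hx
    obtain ⟨x, hxd⟩ := hx
    have hβpow : (b * a ^ x) ^ (p ^ n) = 1 := by
      have hk := key_pow hconj 1 x (p ^ n)
      simp only [pow_one, one_mul] at hk
      rw [hk, ← ht, ← zpow_add]
      exact (haz _).mpr hxd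
    have hβq : (QuotientGroup.mk' N) (b * a ^ x) = bq := by
      rw [map_mul, hb, map_zpow, haq, one_zpow, mul_one]
    have ordβ : orderOf (b * a ^ x) = p ^ n := by
      refine Nat.dvd_antisymm (orderOf_dvd_of_pow_eq_one hβpow) ?_
      calc p ^ n = orderOf bq := hbqn.symm
        _ = orderOf ((QuotientGroup.mk' N) (b * a ^ x)) := by rw [hβq]
        _ ∣ orderOf (b * a ^ x) := orderOf_map_dvd _ _
    have hint : zpowers a ⊓ zpowers (b * a ^ x) = ⊥ := by
      rw [eq_bot_iff]
      rintro g ⟨hga, hgβ⟩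
      obtain ⟨j, hj⟩ := Subgroup.mem_zpowers_iff.mp hgβ
      have hgN : g ∈ N := haN ▸ hga
      have h1 : bq ^ j = 1 := by
        have hmk := congrArg (QuotientGroup.mk' N) hj
        rw [map_zpow, hβq] at hmk
        rw [hmk]
        exact (QuotientGroup.eq_one_iff g).mpr hgN
      obtain ⟨j', hj'⟩ := (hbqz j).mp h1
      have hgone : g = 1 := by
        rw [← hj, hj', zpow_mul,
          show ((p : ℤ) ^ n) = ((p ^ n : ℕ) : ℤ) from by push_cast; ring,
          zpow_natCast, hβpow, one_zpow]
      simpa using hgone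
    exact ⟨a, b * a ^ x, hint, exact_fact _ _ hint (by rw [ham, ordβ, cardG]; ring)⟩
  · -- CASE B : p^min(n,m) does not divide t
    have hmin1 : 1 ≤ min n m := by
      rcases Nat.eq_zero_or_pos (min n m) with h0 | h
      · rw [h0, pow_zero] at hty
        exact absurd (one_dvd t) hty
      · exact h
    set τ := Nat.findGreatest (fun k => (p : ℤ) ^ k ∣ t) (min n m) with hτdef
    have hτt : (p : ℤ) ^ τ ∣ t :=
      Nat.findGreatest_spec (P := fun k => (p : ℤ) ^ k ∣ t) (Nat.zero_le _) (by simp)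
    have hτle : τ ≤ min n m := Nat.findGreatest_le _
    have hτlt : τ < min n m := lt_of_le_of_ne hτle (fun h => hty (h ▸ hτt))
    have hτm : τ < m := lt_of_lt_of_le hτlt (min_le_right n m)
    have hτn : τ < n := lt_of_lt_of_le hτlt (min_le_left n m)
    have hτsucc : ¬ (p : ℤ) ^ (τ + 1) ∣ t :=
      Nat.findGreatest_is_greatest (Nat.lt_succ_self _) hτlt
    obtain ⟨v, hv⟩ := hτt
    have hpv : ¬ (p : ℤ) ∣ v := by
      rintro ⟨w, hw⟩
      exact hτsucc ⟨w, by rw [hv, hw, pow_succ]; ring⟩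
    set ρ : ℤ := r ^ (p ^ (n - τ)) with hρdef
    have hρ1 : (p : ℤ) ∣ ρ - 1 :=
      hr1.trans (by simpa using sub_dvd_pow_sub_pow r 1 (p ^ (n - τ)))
    obtain ⟨A, hA⟩ := Sgeo_pow hp hodd hρ1 τ
    obtain ⟨y, hy⟩ := dvd_solve (prime_pow_coprime hp (m - τ) (not_dvd_one_add hp A)) (-v)
    have hyd : (p : ℤ) ^ m ∣ t + y * Sgeo ρ (p ^ τ) := by
      have he : t + y * Sgeo ρ (p ^ τ) = (p : ℤ) ^ τ * ((1 + p * A) * y - (-v)) := by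
        rw [hv, hA]; ring
      rw [he, show (p : ℤ) ^ m = (p : ℤ) ^ τ * (p : ℤ) ^ (m - τ) from by
        rw [← pow_add]; congr 1; omega]
      exact mul_dvd_mul_left _ hy
    have hpy : ¬ (p : ℤ) ∣ y := by
      intro hdy
      apply hpv
      have h1 : (p : ℤ) ∣ (1 + p * A) * y - (-v) :=
        (dvd_pow_self (p : ℤ) (by omega : m - τ ≠ 0)).trans hy
      have h2 : (p : ℤ) ∣ (1 + p * A) * y := hdy.mul_left _
      simpa using dvd_sub h1 h2
    set β := b ^ (p ^ (n - τ)) * a ^ y with hβdef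
    have hsplit1 : p ^ (n - τ) * p ^ τ = p ^ n := by rw [← pow_add]; congr 1; omega
    have hβτ : β ^ (p ^ τ) = 1 := by
      have hk := key_pow hconj (p ^ (n - τ)) y (p ^ τ)
      rw [hβdef, hk, hsplit1, ← ht, ← zpow_add, ← hρdef]
      exact (haz _).mpr hyd
    have hβq : (QuotientGroup.mk' N) β = bq ^ (p ^ (n - τ)) := by
      rw [hβdef, map_mul, map_pow, hb, map_zpow, haq, one_zpow, mul_one]
    have hordmk : orderOf ((QuotientGroup.mk' N) β) = p ^ τ := by
      rw [hβq, orderOf_pow, hbqn, Nat.gcd_comm,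
        Nat.gcd_eq_left (pow_dvd_pow p (by omega : n - τ ≤ n)),
        Nat.pow_div (by omega) hp.pos]
      congr 1; omega
    have ordβ : orderOf β = p ^ τ :=
      Nat.dvd_antisymm (orderOf_dvd_of_pow_eq_one hβτ) (hordmk ▸ orderOf_map_dvd _ β)
    have hbig : ∀ k : ℕ, b ^ (p ^ n * p ^ k) = a ^ (t * ((p ^ k : ℕ) : ℤ)) := by
      intro k
      rw [pow_mul, ← ht, ← zpow_natCast (a ^ t) (p ^ k), ← zpow_mul]
    have h1ord : b ^ (p ^ (n + (m - τ))) = 1 := by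
      rw [pow_add, hbig (m - τ)]
      apply (haz _).mpr
      rw [hv]
      refine ⟨v, ?_⟩
      push_cast
      rw [show (p : ℤ) ^ m = (p : ℤ) ^ τ * (p : ℤ) ^ (m - τ) from by
        rw [← pow_add]; congr 1; omega]
      ring
    have h2ord : b ^ (p ^ (n + (m - τ) - 1)) ≠ 1 := by
      intro hone
      have heq : n + (m - τ) - 1 = n + (m - τ - 1) := by omega
      rw [heq, pow_add, hbig (m - τ - 1)] at hone
      have hd := (haz _).mp hone
      have hcalc : t * ((p ^ (m - τ - 1) : ℕ) : ℤ) = (p : ℤ) ^ (m - 1) * v := by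
        rw [hv]; push_cast
        rw [show (p : ℤ) ^ τ * v * (p : ℤ) ^ (m - τ - 1)
            = (p : ℤ) ^ (τ + (m - τ - 1)) * v from by rw [pow_add]; ring]
        have he2 : τ + (m - τ - 1) = m - 1 := by omega
        rw [he2]
      rw [hcalc] at hd
      obtain ⟨c, hc⟩ := hd
      apply hpv
      refine ⟨c, ?_⟩
      have hpm1 : (p : ℤ) ^ m = (p : ℤ) ^ (m - 1) * p := by
        rw [← pow_succ]; congr 1; omega
      rw [hpm1] at hc
      have hne : ((p : ℤ)) ^ (m - 1) ≠ 0 := pow_ne_zero _ (by exact_mod_cast hp.pos.ne')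
      apply mul_left_cancel₀ hne
      rw [hc]; ring
    have hbord : orderOf b = p ^ (n + (m - τ)) := by
      have hdvd := orderOf_dvd_of_pow_eq_one h1ord
      obtain ⟨j, hjle, hj⟩ := (Nat.dvd_prime_pow hp).mp hdvd
      have hj' : j = n + (m - τ) := by
        by_contra hne
        apply h2ord
        apply orderOf_dvd_iff_pow_eq_one.mp
        rw [hj]
        exact pow_dvd_pow p (by omega)
      rw [hj, hj']
    have hint : zpowers b ⊓ zpowers β = ⊥ := by
      rcases Nat.eq_zero_or_pos τ with hτ0 | hτpos
      · have hβ1 : β = 1 := orderOf_eq_one_iff.mp (by rw [ordβ, hτ0, pow_zero])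
        rw [hβ1, Subgroup.zpowers_one_eq_bot, inf_bot_eq]
      · rw [eq_bot_iff]
        rintro g ⟨hgb, hgβ⟩
        simp only [Subgroup.mem_bot]
        by_contra hg1
        obtain ⟨j, hj⟩ := Subgroup.mem_zpowers_iff.mp hgβ
        have hβz : β ^ ((p : ℤ) ^ τ) = 1 := by
          rw [show ((p : ℤ) ^ τ) = ((p ^ τ : ℕ) : ℤ) from by push_cast; ring,
            zpow_natCast, hβτ]
        have hjn0 : ¬ (p : ℤ) ^ τ ∣ j := by
          rintro ⟨j', hj'⟩
          apply hg1
          rw [← hj, hj', zpow_mul, hβz, one_zpow]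
        set e := Nat.findGreatest (fun k => (p : ℤ) ^ k ∣ j) τ with hedef
        have he1 : (p : ℤ) ^ e ∣ j :=
          Nat.findGreatest_spec (P := fun k => (p : ℤ) ^ k ∣ j) (Nat.zero_le _) (by simp)
        have hele : e ≤ τ := Nat.findGreatest_le _
        have helt : e < τ := lt_of_le_of_ne hele (fun h => hjn0 (h ▸ he1))
        have he2 : ¬ (p : ℤ) ^ (e + 1) ∣ j := Nat.findGreatest_is_greatest (Nat.lt_succ_self _) helt
        obtain ⟨w, hw⟩ := he1
        have hpw : ¬ (p : ℤ) ∣ w := by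
          rintro ⟨w', hw'⟩
          exact he2 ⟨w', by rw [hw, hw', pow_succ]; ring⟩
        obtain ⟨c, hc⟩ := dvd_solve (prime_pow_coprime hp (τ - e) hpw) ((p : ℤ) ^ (τ - 1 - e))
        obtain ⟨d, hd⟩ := hc
        have hexp : j * c = (p : ℤ) ^ (τ - 1) + (p : ℤ) ^ τ * d := by
          rw [hw]
          have e1 : (p : ℤ) ^ e * (p : ℤ) ^ (τ - 1 - e) = (p : ℤ) ^ (τ - 1) := by
            rw [← pow_add]; congr 1; omega
          have e2 : (p : ℤ) ^ e * (p : ℤ) ^ (τ - e) = (p : ℤ) ^ τ := by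
            rw [← pow_add]; congr 1; omega
          linear_combination (p : ℤ) ^ e * hd + e1 + d * e2
        have hkey : β ^ ((p : ℤ) ^ (τ - 1)) ∈ zpowers b := by
          have h3 : g ^ c ∈ zpowers b := (zpowers b).zpow_mem hgb c
          have h4 : g ^ c = β ^ ((p : ℤ) ^ (τ - 1)) := by
            rw [← hj, ← zpow_mul, hexp, zpow_add, zpow_mul, hβz, one_zpow, mul_one]
          rwa [h4] at h3
        obtain ⟨z, hz⟩ := Subgroup.mem_zpowers_iff.mp hkey
        obtain ⟨B, hB⟩ := Sgeo_pow hp hodd hρ1 (τ - 1)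
        have hsplit2 : p ^ (n - τ) * p ^ (τ - 1) = p ^ (n - 1) := by
          rw [← pow_add]; congr 1; omega
        have hform : β ^ ((p : ℤ) ^ (τ - 1)) = b ^ (p ^ (n - 1)) * a ^ (y * Sgeo ρ (p ^ (τ - 1))) := by
          rw [show ((p : ℤ) ^ (τ - 1)) = ((p ^ (τ - 1) : ℕ) : ℤ) from by push_cast; ring,
            zpow_natCast, hβdef, key_pow hconj (p ^ (n - τ)) y (p ^ (τ - 1)), hsplit2, ← hρdef]
        have hzq : bq ^ z = bq ^ ((p : ℤ) ^ (n - 1)) := by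
          have h5 := congrArg (QuotientGroup.mk' N) hz
          simp only [map_zpow] at h5
          rw [hb, hβq] at h5
          rw [h5, ← zpow_natCast bq (p ^ (n - τ)), ← zpow_mul]
          congr 1
          push_cast
          rw [← pow_add]; congr 1; omega
        have hzd : (p : ℤ) ^ n ∣ z - (p : ℤ) ^ (n - 1) := by
          apply (hbqz _).mp
          rw [zpow_sub, hzq]
          simp
        obtain ⟨w₁, hw₁⟩ := hzd
        have hbz : b ^ z = b ^ ((p : ℤ) ^ (n - 1)) * a ^ (t * w₁) := by
          rw [show z = (p : ℤ) ^ (n - 1) + (p : ℤ) ^ n * w₁ from by linarith, zpow_add]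
          congr 1
          rw [zpow_mul,
            show b ^ ((p : ℤ) ^ n) = a ^ t from by
              rw [show ((p : ℤ) ^ n) = ((p ^ n : ℕ) : ℤ) from by push_cast; ring,
                zpow_natCast, ← ht],
            ← zpow_mul]
        have haeq : a ^ (y * Sgeo ρ (p ^ (τ - 1))) = a ^ (t * w₁) := by
          have hb' : b ^ ((p : ℤ) ^ (n - 1)) = b ^ (p ^ (n - 1) : ℕ) := by
            rw [show ((p : ℤ) ^ (n - 1)) = ((p ^ (n - 1) : ℕ) : ℤ) from by push_cast; ring,
              zpow_natCast]
          have h6 := hz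
          rw [hbz, hform, hb'] at h6
          exact (mul_left_cancel h6).symm
        have hdvd2 : (p : ℤ) ^ m ∣ y * Sgeo ρ (p ^ (τ - 1)) - t * w₁ := by
          apply (haz _).mp
          rw [zpow_sub, haeq]
          simp
        rw [hB, hv] at hdvd2
        have hfact : y * ((p : ℤ) ^ (τ - 1) + (p : ℤ) ^ ((τ - 1) + 1) * B) - (p : ℤ) ^ τ * v * w₁
            = (p : ℤ) ^ (τ - 1) * (y * (1 + p * B) - p * v * w₁) := by
          have e3 : (p : ℤ) ^ τ = (p : ℤ) ^ (τ - 1) * p := by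
            rw [← pow_succ]; congr 1; omega
          rw [e3]; ring
        rw [hfact] at hdvd2
        have hm2 : (p : ℤ) ^ m = (p : ℤ) ^ (τ - 1) * (p : ℤ) ^ (m - (τ - 1)) := by
          rw [← pow_add]; congr 1; omega
        rw [hm2] at hdvd2
        have hne : ((p : ℤ)) ^ (τ - 1) ≠ 0 := pow_ne_zero _ (by exact_mod_cast hp.pos.ne')
        have hcan : (p : ℤ) ^ (m - (τ - 1)) ∣ y * (1 + p * B) - p * v * w₁ :=
          (mul_dvd_mul_iff_left hne).mp hdvd2
        have hp3 : (p : ℤ) ∣ y * (1 + p * B) - p * v * w₁ :=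
          (dvd_pow_self (p : ℤ) (by omega : m - (τ - 1) ≠ 0)).trans hcan
        have hp4 : (p : ℤ) ∣ y * (1 + p * B) := by
          have h7 : (p : ℤ) ∣ p * v * w₁ := ⟨v * w₁, by ring⟩
          simpa using dvd_add hp3 h7
        rcases (Nat.prime_iff_prime_int.mp hp).dvd_mul.mp hp4 with h | h
        · exact hpy h
        · exact not_dvd_one_add hp B h
    exact ⟨b, β, hint, exact_fact _ _ hint (by
      rw [hbord, ordβ, cardG, ← pow_add, ← pow_add]
      congr 1; omega)⟩
end

section
/- Let p be an odd prime and n a positive integer. Then for every integer k with 3 ≤ k ≤ n + 2, the power p^{n−k+2} divides the binomial coefficient C(p^n, k). -/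
lemma aux_pow3 : ∀ m : ℕ, 1 ≤ m → m + 2 ≤ 3 ^ m := by
  intro m hm
  induction m with
  | zero => omega
  | succ n ih =>
    rcases Nat.eq_or_lt_of_le hm with h | h
    · simp [← h]
    · have h1 : 1 ≤ n := by omega
      have := ih h1
      have : 3 ^ n ≤ 3 ^ (n + 1) := Nat.pow_le_pow_right (by norm_num) (by omega)
      omega

/-- Let `p` be an odd prime and `n ≥ 1`. For every `k` with `3 ≤ k ≤ n + 2`,
the power `p^(n - k + 2)` divides the binomial coefficient `C(p^n, k)`. -/
theorem stmt_1 (p n : ℕ) (hp : p.Prime) (hodd : Odd p) (hn : 0 < n)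
    (k : ℕ) (hk1 : 3 ≤ k) (hk2 : k ≤ n + 2) :
    p ^ (n + 2 - k) ∣ (p ^ n).choose k := by
  have hp3 : 3 ≤ p := by
    rcases hp.eq_two_or_odd with h | h
    · exfalso; rw [h] at hodd; exact (Nat.not_odd_iff_even.mpr (by norm_num)) hodd
    · have := hp.two_le; omega
  have hkpn : k ≤ p ^ n := by
    calc k ≤ n + 2 := hk2
    _ ≤ 3 ^ n := aux_pow3 n hn
    _ ≤ p ^ n := Nat.pow_le_pow_left hp3 n
  set m := multiplicity p k with hm
  have hmdvd : p ^ m ∣ k := pow_multiplicity_dvd p k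
  have hmle : m ≤ k - 2 := by
    rcases Nat.eq_zero_or_pos m with h0 | h0
    · omega
    · have h1 : m + 2 ≤ 3 ^ m := aux_pow3 m h0
      have h2 : 3 ^ m ≤ p ^ m := Nat.pow_le_pow_left hp3 m
      have h3 : p ^ m ≤ k := Nat.le_of_dvd (by omega) hmdvd
      omega
  apply pow_dvd_of_le_emultiplicity
  rw [hp.emultiplicity_choose_prime_pow hkpn (by omega)]
  exact_mod_cast (by omega : n + 2 - k ≤ n - m)
end

section
/- Let p be an odd prime. The groups M₁(p,d,e,f) with (1 ≤ d ≤ f ≤ e ≤ d+f or 1 ≤ f < d < e ≤ d+f), M₂(p,d,e,f) with 1 ≤ f < d < e, and M₃(p,d,e,h,f) with h − d ≤ f < d < h < e are pairwise non-isomorphic: two groups from this list are isomorphic only if they belong to the same family and have identical parameter tuples. -/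
/-- Relators for the group `M₁(p,d,e,f) = ⟨a, b ∣ a^(p^e) = b^(p^d) = 1, b⁻¹ab = a^(1+p^f)⟩`,
where `a` is generator `0` and `b` is generator `1`. -/
def M1rels (p d e f : ℕ) : Set (FreeGroup (Fin 2)) :=
  {FreeGroup.of 0 ^ p ^ e, FreeGroup.of 1 ^ p ^ d,
    (FreeGroup.of 1)⁻¹ * FreeGroup.of 0 * FreeGroup.of 1 * (FreeGroup.of 0 ^ (1 + p ^ f))⁻¹}

/-- The metacyclic group `M₁(p,d,e,f) = ⟨a, b ∣ a^(p^e) = b^(p^d) = 1, b⁻¹ab = a^(1+p^f)⟩`. -/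
abbrev M1 (p d e f : ℕ) : Type := PresentedGroup (M1rels p d e f)

/-- The canonical generator `a` of `M₁(p,d,e,f)`. -/
def M1a (p d e f : ℕ) : M1 p d e f := PresentedGroup.of 0

/-- The canonical generator `b` of `M₁(p,d,e,f)`. -/
def M1b (p d e f : ℕ) : M1 p d e f := PresentedGroup.of 1

/-- Relators for the group `M₂(p,d,e,f) = ⟨a, b ∣ a^(p^d) = b^(p^e) = 1, b⁻¹ab = a^(1+p^f)⟩`,
where `a` is generator `0` and `b` is generator `1`. -/
def M2rels (p d e f : ℕ) : Set (FreeGroup (Fin 2)) :=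
  {FreeGroup.of 0 ^ p ^ d, FreeGroup.of 1 ^ p ^ e,
    (FreeGroup.of 1)⁻¹ * FreeGroup.of 0 * FreeGroup.of 1 * (FreeGroup.of 0 ^ (1 + p ^ f))⁻¹}

/-- The metacyclic group `M₂(p,d,e,f) = ⟨a, b ∣ a^(p^d) = b^(p^e) = 1, b⁻¹ab = a^(1+p^f)⟩`. -/
abbrev M2 (p d e f : ℕ) : Type := PresentedGroup (M2rels p d e f)

/-- The canonical generator `a` of `M₂(p,d,e,f)`. -/
def M2a (p d e f : ℕ) : M2 p d e f := PresentedGroup.of 0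

/-- The canonical generator `b` of `M₂(p,d,e,f)`. -/
def M2b (p d e f : ℕ) : M2 p d e f := PresentedGroup.of 1

/-- Relators for the group
`M₃(p,d,e,h,f) = ⟨a, b ∣ a^(p^h) = 1, b^(p^(d+e-h)) = a^(p^d), b⁻¹ab = a^(1+p^f)⟩`,
where `a` is generator `0` and `b` is generator `1`. -/
def M3rels (p d e h f : ℕ) : Set (FreeGroup (Fin 2)) :=
  {FreeGroup.of 0 ^ p ^ h, FreeGroup.of 1 ^ p ^ (d + e - h) * (FreeGroup.of 0 ^ p ^ d)⁻¹,
    (FreeGroup.of 1)⁻¹ * FreeGroup.of 0 * FreeGroup.of 1 * (FreeGroup.of 0 ^ (1 + p ^ f))⁻¹}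

/-- The non-split metacyclic group
`M₃(p,d,e,h,f) = ⟨a, b ∣ a^(p^h) = 1, b^(p^(d+e-h)) = a^(p^d), b⁻¹ab = a^(1+p^f)⟩`. -/
abbrev M3 (p d e h f : ℕ) : Type := PresentedGroup (M3rels p d e h f)

/-- The canonical generator `a` of `M₃(p,d,e,h,f)`. -/
def M3a (p d e h f : ℕ) : M3 p d e h f := PresentedGroup.of 0

/-- The canonical generator `b` of `M₃(p,d,e,h,f)`. -/
def M3b (p d e h f : ℕ) : M3 p d e h f := PresentedGroup.of 1

/-- `(α, β)` is an exact `(m,n)`-bicyclic pair of `G`: `α` has order `m`, `β` has order `n`,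
`⟨α⟩ ∩ ⟨β⟩ = 1`, and `G = ⟨α⟩⟨β⟩`. -/
def IsExactBicyclicPair {G : Type*} [Group G] (m n : ℕ) (α β : G) : Prop :=
  orderOf α = m ∧ orderOf β = n ∧
    Subgroup.zpowers α ⊓ Subgroup.zpowers β = ⊥ ∧
    ∀ g : G, ∃ i j : ℤ, g = α ^ i * β ^ j

/-- Parameter conditions for the family `M₁`. -/
def Cond1 (d e f : ℕ) : Prop :=
  (1 ≤ d ∧ d ≤ f ∧ f ≤ e ∧ e ≤ d + f) ∨ (1 ≤ f ∧ f < d ∧ d < e ∧ e ≤ d + f)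

/-- Parameter conditions for the family `M₂`. -/
def Cond2 (d e f : ℕ) : Prop := 1 ≤ f ∧ f < d ∧ d < e

/-- Parameter conditions for the family `M₃`. -/
def Cond3 (d e h f : ℕ) : Prop := h - d ≤ f ∧ f < d ∧ d < h ∧ h < e


/-!
The numbers `|G|`, `exp G`, `|Gᵃᵇ|` and `exp Gᵃᵇ` are isomorphism invariants; for the three
families they are powers of `p` whose exponents already determine the family and its parameters.

Each family is a presented group `⟨a, b ∣ a ^ P = 1, b ^ Q = a ^ K, b⁻¹ a b = a ^ R⟩`. Every
element is `b ^ j * a ^ i` with `j < Q`, `i < P`, so `|G| ≤ Q P`; when `R ^ Q ≡ 1` and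
`K (R - 1) ≡ 0` modulo `P`, an explicit multiplication on `ℤ/Q × ℤ/P` satisfies the relations, so
`|G| = Q P` and `a`, `b` have the expected orders. The exponent is bounded through
`(b ^ j * a ^ i) ^ n = b ^ (j n) * a ^ (i (1 + R ^ j + ⋯ + R ^ (j (n - 1))))` and the fact that
`p ^ n` divides `1 + u + ⋯ + u ^ (p ^ n - 1)` when `u ≡ 1 [MOD p]`. For `R = 1 + D` with `D`
dividing `P` and `K`, the abelianization is `ℤ/D × ℤ/Q`.
-/

open Finset

theorem geom_sum_range_mul {A : Type*} [CommSemiring A] (u : A) (m n : ℕ) :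
    ∑ k ∈ range (m * n), u ^ k = (∑ i ∈ range m, u ^ i) * ∑ j ∈ range n, (u ^ m) ^ j := by
  induction n with
  | zero => simp
  | succ n ih =>
    rw [Nat.mul_succ, sum_range_add, ih, sum_range_succ, mul_add, ← pow_mul]
    simp only [pow_add, ← mul_sum]
    ring

theorem pow_dvd_geom_sum_of_dvd_sub_one {A : Type*} [CommRing A] {p : ℕ} {u : A}
    (hu : (p : A) ∣ u - 1) (n : ℕ) : (p : A) ^ n ∣ ∑ k ∈ range (p ^ n), u ^ k := by
  induction n with
  | zero => simp
  | succ n ih =>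
    have hp : (p : A) ∣ ∑ j ∈ range p, (u ^ p ^ n) ^ j := by
      simpa using dvd_geom_sum₂_self (x := u ^ p ^ n) (y := 1)
        (by simpa using hu.trans (sub_one_dvd_pow_sub_one u (p ^ n)))
    rw [pow_succ (p : A), pow_succ p n, geom_sum_range_mul]
    exact mul_dvd_mul ih hp

theorem Nat.div_add_mod_add_div {Q : ℕ} (hQ : 0 < Q) (m k : ℕ) :
    m / Q + (m % Q + k) / Q = (m + k) / Q := by
  conv_rhs => rw [← Nat.div_add_mod m Q, add_assoc, Nat.mul_add_div hQ]

namespace Metacyclic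

variable {G : Type*} [Group G] {a b : G} {P Q K R : ℕ}

theorem inv_mul_pow_mul (hab : b⁻¹ * a * b = a ^ R) (m : ℕ) :
    b⁻¹ * a ^ m * b = a ^ (m * R) := by
  have h := conj_pow (a := b⁻¹) (b := a) (i := m)
  rw [inv_inv] at h
  rw [← h, hab, ← pow_mul, mul_comm]

theorem inv_pow_mul_pow_mul_pow (hab : b⁻¹ * a * b = a ^ R) (j m : ℕ) :
    (b ^ j)⁻¹ * a ^ m * b ^ j = a ^ (m * R ^ j) := by
  induction j generalizing m with
  | zero => simp
  | succ j ih =>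
    rw [pow_succ, mul_inv_rev, show b⁻¹ * (b ^ j)⁻¹ * a ^ m * (b ^ j * b) =
      b⁻¹ * ((b ^ j)⁻¹ * a ^ m * b ^ j) * b by group, ih, inv_mul_pow_mul hab, pow_succ,
      mul_assoc]

theorem pow_mul_pow_pow (hab : b⁻¹ * a * b = a ^ R) (j i n : ℕ) :
    (b ^ j * a ^ i) ^ n = b ^ (j * n) * a ^ (i * ∑ k ∈ range n, (R ^ j) ^ k) := by
  induction n with
  | zero => simp
  | succ n ih =>
    rw [pow_succ, ih, geom_sum_succ, mul_add_one, pow_add, mul_add_one, pow_add,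
      mul_left_comm, mul_comm (R ^ j), ← inv_pow_mul_pow_mul_pow hab]
    group

variable (hP : 0 < P) (hQ : 0 < Q) (ha : a ^ P = 1) (hb : b ^ Q = a ^ K)
  (hab : b⁻¹ * a * b = a ^ R) (hgen : Subgroup.closure {a, b} = ⊤)
include hP hQ ha hb hab hgen

theorem exists_eq_pow_mul_pow (g : G) : ∃ j i : ℕ, g = b ^ j * a ^ i := by
  have hfin : ∀ x ∈ ({a, b} : Set G), IsOfFinOrder x := by
    rintro x (rfl | rfl) <;> refine isOfFinOrder_iff_pow_eq_one.mpr ?_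
    · exact ⟨P, hP, ha⟩
    · exact ⟨Q * P, by positivity, by rw [pow_mul, hb, ← pow_mul, mul_comm, pow_mul, ha, one_pow]⟩
  have htop : Submonoid.closure {a, b} = ⊤ := by
    rw [← Subgroup.closure_toSubmonoid_of_isOfFinOrder hfin, hgen, Subgroup.top_toSubmonoid]
  induction g using Submonoid.induction_of_closure_eq_top_right htop with
  | one => exact ⟨0, 0, by simp⟩
  | mul_right g x hx ih =>
    obtain ⟨j, i, rfl⟩ := ih
    rcases hx with rfl | rfl
    · exact ⟨j, i + 1, by rw [pow_succ, mul_assoc]⟩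
    · refine ⟨j + 1, i * R, ?_⟩
      rw [← inv_mul_pow_mul hab, pow_succ]
      group

theorem exists_eq_pow_mul_pow_of_lt (g : G) : ∃ j < Q, ∃ i < P, g = b ^ j * a ^ i := by
  obtain ⟨j, i, rfl⟩ := exists_eq_pow_mul_pow hP hQ ha hb hab hgen g
  refine ⟨j % Q, Nat.mod_lt j hQ, (K * (j / Q) + i) % P, Nat.mod_lt _ hP, ?_⟩
  rw [← pow_eq_pow_mod _ ha, pow_add, pow_mul, ← hb, ← pow_mul, ← mul_assoc, ← pow_add,
    Nat.mod_add_div]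

theorem finite_and_card_le : Finite G ∧ Nat.card G ≤ Q * P := by
  let φ : Fin Q × Fin P → G := fun x => b ^ (x.1 : ℕ) * a ^ (x.2 : ℕ)
  have hφ : Function.Surjective φ := fun g => by
    obtain ⟨j, hj, i, hi, rfl⟩ := exists_eq_pow_mul_pow_of_lt hP hQ ha hb hab hgen g
    exact ⟨(⟨j, hj⟩, ⟨i, hi⟩), rfl⟩
  refine ⟨Finite.of_surjective φ hφ, ?_⟩
  simpa using Nat.card_le_card_of_surjective φ hφ

theorem exponent_dvd_of_dvd_geom_sum {n : ℕ} (hQn : Q ∣ n) (hKn : P ∣ K * (n / Q))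
    (hsum : ∀ j, P ∣ ∑ k ∈ range n, (R ^ j) ^ k) : Monoid.exponent G ∣ n := by
  have ha' : ∀ m, P ∣ m → a ^ m = 1 := by
    rintro _ ⟨c, rfl⟩
    rw [pow_mul, ha, one_pow]
  obtain ⟨t, rfl⟩ := hQn
  rw [Nat.mul_div_cancel_left t hQ] at hKn
  refine Monoid.exponent_dvd_of_forall_pow_eq_one fun g => ?_
  obtain ⟨j, i, rfl⟩ := exists_eq_pow_mul_pow hP hQ ha hb hab hgen g
  rw [pow_mul_pow_pow hab, mul_left_comm j, pow_mul, hb, ← pow_mul, mul_left_comm K,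
    ha' _ (hKn.mul_left j), ha' _ ((hsum j).mul_left i), one_mul]

end Metacyclic

/-- `(j, i)` stands for `b ^ j * a ^ i` in the group with relations `a ^ P = 1`, `b ^ Q = a ^ K`,
`b⁻¹ * a * b = a ^ R`: the carry `(j + j') / Q` of the `b`-exponents turns into a power of
`a ^ K`. -/
def MetacyclicModel (P Q _K _R : ℕ) : Type := ZMod Q × ZMod P

namespace MetacyclicModel

variable {P Q K R : ℕ}

def mk (j : ZMod Q) (i : ZMod P) : MetacyclicModel P Q K R := (j, i)

theorem mk_inj {j j' : ZMod Q} {i i' : ZMod P} :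
    (mk j i : MetacyclicModel P Q K R) = mk j' i' ↔ j = j' ∧ i = i' := Prod.ext_iff

theorem card : Nat.card (MetacyclicModel P Q K R) = Q * P :=
  (Nat.card_prod (ZMod Q) (ZMod P)).trans (by rw [Nat.card_zmod, Nat.card_zmod])

instance : One (MetacyclicModel P Q K R) := ⟨mk 0 0⟩

instance : Mul (MetacyclicModel P Q K R) :=
  ⟨fun x y => mk (x.1 + y.1)
    ((R : ZMod P) ^ y.1.val * x.2 + y.2 +
      (K : ZMod P) * (((x.1.val + y.1.val) / Q : ℕ) : ZMod P))⟩

instance : Inv (MetacyclicModel P Q K R) :=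
  ⟨fun x => mk (-x.1)
    (-((R : ZMod P) ^ (-x.1).val *
      (x.2 + (K : ZMod P) * (((x.1.val + (-x.1).val) / Q : ℕ) : ZMod P))))⟩

theorem one_def : (1 : MetacyclicModel P Q K R) = mk 0 0 := rfl

theorem mk_mul_mk (j j' : ZMod Q) (i i' : ZMod P) :
    (mk j i : MetacyclicModel P Q K R) * mk j' i' =
      mk (j + j')
        ((R : ZMod P) ^ j'.val * i + i' + (K : ZMod P) * (((j.val + j'.val) / Q : ℕ) : ZMod P)) :=
  rfl

theorem inv_mk (j : ZMod Q) (i : ZMod P) :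
    (mk j i : MetacyclicModel P Q K R)⁻¹ =
      mk (-j) (-((R : ZMod P) ^ (-j).val *
        (i + (K : ZMod P) * (((j.val + (-j).val) / Q : ℕ) : ZMod P)))) :=
  rfl

variable [NeZero Q]

theorem pow_val_add (hR : (R : ZMod P) ^ Q = 1) (j j' : ZMod Q) :
    (R : ZMod P) ^ (j + j').val = (R : ZMod P) ^ j.val * (R : ZMod P) ^ j'.val := by
  rw [ZMod.val_add, ← pow_add, pow_eq_pow_mod _ hR, Nat.mod_mod, ← pow_eq_pow_mod _ hR]

theorem pow_mul_K (hK : (K : ZMod P) * (R - 1) = 0) (n : ℕ) : (R : ZMod P) ^ n * K = K := by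
  induction n with
  | zero => rw [pow_zero, one_mul]
  | succ n ih => rw [pow_succ, mul_assoc, show (R : ZMod P) * K = K by linear_combination hK, ih]

protected theorem mul_assoc (hR : (R : ZMod P) ^ Q = 1) (hK : (K : ZMod P) * (R - 1) = 0)
    (x y z : MetacyclicModel P Q K R) : x * y * z = x * (y * z) := by
  obtain ⟨j, i⟩ := x
  obtain ⟨j', i'⟩ := y
  obtain ⟨j'', i''⟩ := z
  have hQ : 0 < Q := NeZero.pos Q
  have hcarry : (((j.val + j'.val) / Q + ((j + j').val + j''.val) / Q : ℕ) : ZMod P) =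
      (((j'.val + j''.val) / Q + (j.val + (j' + j'').val) / Q : ℕ) : ZMod P) := by
    rw [ZMod.val_add, ZMod.val_add, Nat.div_add_mod_add_div hQ,
      add_comm j.val ((j'.val + j''.val) % Q), Nat.div_add_mod_add_div hQ, add_assoc,
      add_comm j.val]
  push_cast at hcarry
  change (mk j i : MetacyclicModel P Q K R) * mk j' i' * mk j'' i'' =
    mk j i * (mk j' i' * mk j'' i'')
  simp only [mk_mul_mk, mk_inj, add_assoc, true_and, pow_val_add hR]
  linear_combination (((j.val + j'.val) / Q : ℕ) : ZMod P) * pow_mul_K hK j''.val +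
    (K : ZMod P) * hcarry

protected theorem one_mul (x : MetacyclicModel P Q K R) : 1 * x = x := by
  obtain ⟨j, i⟩ := x
  change (mk 0 0 : MetacyclicModel P Q K R) * mk j i = mk j i
  simp [mk_mul_mk, Nat.div_eq_of_lt (ZMod.val_lt j)]

protected theorem inv_mul_cancel (hR : (R : ZMod P) ^ Q = 1) (x : MetacyclicModel P Q K R) :
    x⁻¹ * x = 1 := by
  obtain ⟨j, i⟩ := x
  change (mk j i : MetacyclicModel P Q K R)⁻¹ * mk j i = mk 0 0
  have h1 : (R : ZMod P) ^ j.val * (R : ZMod P) ^ (-j).val = 1 := by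
    rw [← pow_val_add hR, add_neg_cancel, ZMod.val_zero, pow_zero]
  rw [inv_mk, mk_mul_mk, mk_inj, add_comm j.val]
  exact ⟨neg_add_cancel j,
    by linear_combination (-(i + (K : ZMod P) * (((-j).val + j.val) / Q : ℕ))) * h1⟩

variable [hR : Fact ((R : ZMod P) ^ Q = 1)] [hK : Fact ((K : ZMod P) * (R - 1) = 0)]

instance : Group (MetacyclicModel P Q K R) :=
  Group.ofLeftAxioms (MetacyclicModel.mul_assoc hR.out hK.out) MetacyclicModel.one_mul
    (MetacyclicModel.inv_mul_cancel hR.out)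

def a : MetacyclicModel P Q K R := mk 0 1

def b : MetacyclicModel P Q K R := mk 1 0

theorem a_pow (n : ℕ) : (a : MetacyclicModel P Q K R) ^ n = mk 0 n := by
  induction n with
  | zero => rw [pow_zero, Nat.cast_zero]; rfl
  | succ n ih =>
    rw [pow_succ, ih, a, mk_mul_mk]
    simp

theorem a_pow_P : (a : MetacyclicModel P Q K R) ^ P = 1 := by
  rw [a_pow, ZMod.natCast_self]; rfl

theorem dvd_of_a_pow_eq_one {n : ℕ} (h : (a : MetacyclicModel P Q K R) ^ n = 1) : P ∣ n := by
  rw [a_pow, one_def, mk_inj] at h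
  exact (ZMod.natCast_eq_zero_iff n P).mp h.2

variable [Fact (1 < Q)]

theorem b_pow (n : ℕ) :
    (b : MetacyclicModel P Q K R) ^ n = mk n ((K * (n / Q) : ℕ) : ZMod P) := by
  induction n with
  | zero => simp; rfl
  | succ n ih =>
    rw [pow_succ, ih, b, mk_mul_mk, ZMod.val_one, ZMod.val_natCast, pow_one, mk_inj,
      ← Nat.div_add_mod_add_div (NeZero.pos Q) n 1]
    push_cast
    exact ⟨rfl, by linear_combination ((n / Q : ℕ) : ZMod P) * hK.out⟩

theorem b_pow_mul_a_pow [NeZero P] (j : ZMod Q) (i : ZMod P) :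
    (b : MetacyclicModel P Q K R) ^ j.val * a ^ i.val = mk j i := by
  simp [b_pow, a_pow, mk_mul_mk, Nat.div_eq_of_lt (ZMod.val_lt j)]

theorem b_pow_Q : (b : MetacyclicModel P Q K R) ^ Q = a ^ K := by
  rw [b_pow, a_pow, Nat.div_self (NeZero.pos Q), ZMod.natCast_self, Nat.mul_one]

theorem inv_b_mul_a_mul_b : (b⁻¹ * a * b : MetacyclicModel P Q K R) = a ^ R := by
  have hQ : 1 < Q := Fact.out
  rw [mul_assoc, inv_mul_eq_iff_eq_mul, a_pow, a, b, mk_mul_mk, mk_mul_mk, ZMod.val_one]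
  simp [Nat.div_eq_of_lt hQ]

theorem dvd_of_b_pow_eq_one {n : ℕ} (h : (b : MetacyclicModel P Q K R) ^ n = 1) :
    Q ∣ n ∧ P ∣ K * (n / Q) := by
  rw [b_pow, one_def, mk_inj] at h
  exact ⟨(ZMod.natCast_eq_zero_iff n Q).mp h.1, (ZMod.natCast_eq_zero_iff _ P).mp h.2⟩

end MetacyclicModel

def metacyclicRels (P Q K R : ℕ) : Set (FreeGroup (Fin 2)) :=
  {FreeGroup.of 0 ^ P, FreeGroup.of 1 ^ Q * (FreeGroup.of 0 ^ K)⁻¹,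
    (FreeGroup.of 1)⁻¹ * FreeGroup.of 0 * FreeGroup.of 1 * (FreeGroup.of 0 ^ R)⁻¹}

abbrev MetacyclicGroup (P Q K R : ℕ) : Type := PresentedGroup (metacyclicRels P Q K R)

namespace MetacyclicGroup

variable {P Q K R : ℕ}

def a : MetacyclicGroup P Q K R := PresentedGroup.of 0

def b : MetacyclicGroup P Q K R := PresentedGroup.of 1

theorem a_pow_P : (a : MetacyclicGroup P Q K R) ^ P = 1 := by
  simpa [a, PresentedGroup.of] using
    PresentedGroup.one_of_mem (rels := metacyclicRels P Q K R) (Or.inl rfl)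

theorem b_pow_Q : (b : MetacyclicGroup P Q K R) ^ Q = a ^ K := by
  simpa [a, b, PresentedGroup.of] using
    PresentedGroup.mk_eq_mk_of_mul_inv_mem (rels := metacyclicRels P Q K R) (Or.inr (Or.inl rfl))

theorem inv_b_mul_a_mul_b : (b⁻¹ * a * b : MetacyclicGroup P Q K R) = a ^ R := by
  simpa [a, b, PresentedGroup.of] using
    PresentedGroup.mk_eq_mk_of_mul_inv_mem (rels := metacyclicRels P Q K R) (Or.inr (Or.inr rfl))

theorem closure_a_b : Subgroup.closure {a, b} = (⊤ : Subgroup (MetacyclicGroup P Q K R)) := by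
  rw [← PresentedGroup.closure_range_of, Set.range, a, b]
  congr 1
  ext
  simp [Fin.exists_fin_two, eq_comm]

section lift

variable {H : Type*} [Group H] {x y : H} (hx : x ^ P = 1) (hy : y ^ Q = x ^ K)
  (hxy : y⁻¹ * x * y = x ^ R)

def lift : MetacyclicGroup P Q K R →* H :=
  PresentedGroup.toGroup (f := ![x, y]) <| by
    rintro r (rfl | rfl | rfl) <;> simp [hx, hy, hxy]

theorem lift_a : lift hx hy hxy a = x := PresentedGroup.toGroup.of _

theorem lift_b : lift hx hy hxy b = y := PresentedGroup.toGroup.of _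

end lift

section model

variable [Fact (1 < Q)] [Fact ((R : ZMod P) ^ Q = 1)] [Fact ((K : ZMod P) * (R - 1) = 0)]

def toModel : MetacyclicGroup P Q K R →* MetacyclicModel P Q K R :=
  lift MetacyclicModel.a_pow_P MetacyclicModel.b_pow_Q MetacyclicModel.inv_b_mul_a_mul_b

theorem toModel_a : toModel (a : MetacyclicGroup P Q K R) = MetacyclicModel.a := lift_a ..

theorem toModel_b : toModel (b : MetacyclicGroup P Q K R) = MetacyclicModel.b := lift_b ..

theorem toModel_surjective [NeZero P] :
    Function.Surjective (toModel : MetacyclicGroup P Q K R →* MetacyclicModel P Q K R) :=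
  fun x => ⟨b ^ x.1.val * a ^ x.2.val, by
    rw [map_mul, map_pow, map_pow, toModel_a, toModel_b, MetacyclicModel.b_pow_mul_a_pow]
    rfl⟩

end model

section consistent

variable (hQ : 1 < Q) (hR : (R : ZMod P) ^ Q = 1) (hK : (K : ZMod P) * (R - 1) = 0)
include hQ hR hK

theorem card (hP : 0 < P) : Nat.card (MetacyclicGroup P Q K R) = Q * P := by
  have := NeZero.of_pos hP
  have := Fact.mk hQ
  have := Fact.mk hR
  have := Fact.mk hK
  obtain ⟨_, hle⟩ := Metacyclic.finite_and_card_le hP (show 0 < Q by omega) a_pow_P b_pow_Q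
    inv_b_mul_a_mul_b (closure_a_b (K := K) (R := R))
  refine hle.antisymm ?_
  rw [← MetacyclicModel.card (K := K) (R := R)]
  exact Nat.card_le_card_of_surjective _ toModel_surjective

theorem orderOf_a : orderOf (a : MetacyclicGroup P Q K R) = P := by
  have := Fact.mk hQ
  have := Fact.mk hR
  have := Fact.mk hK
  refine Nat.dvd_antisymm (orderOf_dvd_of_pow_eq_one a_pow_P)
    (MetacyclicModel.dvd_of_a_pow_eq_one (Q := Q) (K := K) (R := R) ?_)
  rw [← toModel_a, ← map_pow, pow_orderOf_eq_one, map_one]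

theorem dvd_of_b_pow_eq_one {n : ℕ} (h : (b : MetacyclicGroup P Q K R) ^ n = 1) :
    Q ∣ n ∧ P ∣ K * (n / Q) := by
  have := Fact.mk hQ
  have := Fact.mk hR
  have := Fact.mk hK
  refine MetacyclicModel.dvd_of_b_pow_eq_one (R := R) ?_
  rw [← toModel_b, ← map_pow, h, map_one]

end consistent

section abelianization

open Multiplicative

theorem card_multiplicative_zmod_prod (m n : ℕ) :
    Nat.card (Multiplicative (ZMod m) × Multiplicative (ZMod n)) = m * n := by
  rw [Nat.card_prod, Nat.card_congr toAdd, Nat.card_congr toAdd, Nat.card_zmod, Nat.card_zmod]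

variable {D : ℕ} [NeZero D] [NeZero Q]

theorem finite_and_card_abelianization_le (hDK : D ∣ K) :
    Finite (Abelianization (MetacyclicGroup P Q K (1 + D))) ∧
      Nat.card (Abelianization (MetacyclicGroup P Q K (1 + D))) ≤ Q * D := by
  let a' : Abelianization (MetacyclicGroup P Q K (1 + D)) := .of a
  let b' : Abelianization (MetacyclicGroup P Q K (1 + D)) := .of b
  have hgen : Subgroup.closure {a', b'} = ⊤ := by
    rw [← Set.image_pair, ← MonoidHom.map_closure, closure_a_b,
      Subgroup.map_top_of_surjective _ (QuotientGroup.mk_surjective (s := commutator _))]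
  have hcomm : ∀ g h : Abelianization (MetacyclicGroup P Q K (1 + D)), h⁻¹ * g * h = g :=
    fun g h => by rw [mul_right_comm, inv_mul_cancel, one_mul]
  have ha : a' ^ D = 1 := by
    have h := congrArg Abelianization.of
      (inv_b_mul_a_mul_b (P := P) (Q := Q) (K := K) (R := 1 + D))
    rwa [map_mul, map_mul, map_inv, hcomm, map_pow, pow_add, pow_one, left_eq_mul] at h
  have hb : b' ^ Q = a' ^ 0 := by
    obtain ⟨c, rfl⟩ := hDK
    rw [← map_pow, b_pow_Q, map_pow, pow_mul, ha, one_pow, pow_zero]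
  exact Metacyclic.finite_and_card_le (NeZero.pos D) (NeZero.pos Q) ha hb
    (by rw [hcomm, pow_one]) hgen

noncomputable def abelianizationEquiv (hDP : D ∣ P) (hDK : D ∣ K) :
    Abelianization (MetacyclicGroup P Q K (1 + D)) ≃*
      Multiplicative (ZMod D) × Multiplicative (ZMod Q) := by
  set x : Multiplicative (ZMod D) × Multiplicative (ZMod Q) := (ofAdd 1, 1)
  set y : Multiplicative (ZMod D) × Multiplicative (ZMod Q) := (1, ofAdd 1)
  have hD : ∀ n, D ∣ n → x ^ n = 1 := fun n hn => by
    simp [x, ← ofAdd_nsmul, (ZMod.natCast_eq_zero_iff n D).mpr hn]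
  have hx : x ^ P = 1 := hD P hDP
  have hy : y ^ Q = x ^ K := by simp [y, ← ofAdd_nsmul, hD K hDK]
  have hxy : y⁻¹ * x * y = x ^ (1 + D) := by
    rw [mul_right_comm, inv_mul_cancel, one_mul, pow_add, pow_one, hD D dvd_rfl, mul_one]
  let φ := Abelianization.lift (lift (P := P) (Q := Q) (K := K) (R := 1 + D) hx hy hxy)
  have hsurj : Function.Surjective φ := fun t =>
    ⟨.of b ^ (toAdd t.2).val * .of a ^ (toAdd t.1).val,
      by simp [φ, lift_a, lift_b, x, y, ← ofAdd_nsmul]⟩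
  obtain ⟨_, hcard⟩ := finite_and_card_abelianization_le (P := P) (Q := Q) hDK
  refine MulEquiv.ofBijective φ (hsurj.bijective_of_nat_card_le ?_)
  rw [card_multiplicative_zmod_prod, mul_comm]
  exact hcard

theorem card_abelianization (hDP : D ∣ P) (hDK : D ∣ K) :
    Nat.card (Abelianization (MetacyclicGroup P Q K (1 + D))) = D * Q := by
  rw [Nat.card_congr (abelianizationEquiv hDP hDK).toEquiv, card_multiplicative_zmod_prod]

theorem exponent_abelianization (hDP : D ∣ P) (hDK : D ∣ K) :
    Monoid.exponent (Abelianization (MetacyclicGroup P Q K (1 + D))) = lcm D Q := by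
  rw [Monoid.exponent_eq_of_mulEquiv (abelianizationEquiv hDP hDK), Monoid.exponent_prod,
    Monoid.exponent_multiplicative, Monoid.exponent_multiplicative, ZMod.exponent, ZMod.exponent]

end abelianization

end MetacyclicGroup

section PrimePower

variable {p f : ℕ}

theorem dvd_geom_sum_one_add_pow (hf : 1 ≤ f) {E n : ℕ} (hE : E ≤ n) (j : ℕ) :
    p ^ E ∣ ∑ k ∈ range (p ^ n), ((1 + p ^ f) ^ j) ^ k := by
  have hu : (p : ℤ) ∣ (1 + (p : ℤ) ^ f) ^ j - 1 :=
    (dvd_pow_self (p : ℤ) (Nat.one_le_iff_ne_zero.mp hf)).trans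
      (by simpa using sub_one_dvd_pow_sub_one (1 + (p : ℤ) ^ f) j)
  exact Int.natCast_dvd_natCast.mp (by
    push_cast
    exact (pow_dvd_pow (p : ℤ) hE).trans (pow_dvd_geom_sum_of_dvd_sub_one hu n))

theorem one_add_pow_pow_eq_one (hf : 1 ≤ f) {E N : ℕ} (hE : E ≤ f + N) :
    ((1 + p ^ f : ℕ) : ZMod (p ^ E)) ^ p ^ N = 1 := by
  set x : ZMod (p ^ E) := ((1 + p ^ f : ℕ) : ZMod (p ^ E))
  have hx : x - 1 = (p : ZMod (p ^ E)) ^ f := by simp [x]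
  have hu : (p : ZMod (p ^ E)) ∣ x - 1 := hx ▸ dvd_pow_self _ (Nat.one_le_iff_ne_zero.mp hf)
  have hzero : (p : ZMod (p ^ E)) ^ (N + f) = 0 := by
    exact_mod_cast (ZMod.natCast_eq_zero_iff _ _).mpr (pow_dvd_pow p (by omega))
  have hdvd := mul_dvd_mul (pow_dvd_geom_sum_of_dvd_sub_one hu N) hx.symm.dvd
  rwa [geom_sum_mul, ← pow_add, hzero, zero_dvd_iff, sub_eq_zero] at hdvd

theorem natCast_mul_one_add_pow_sub_one {E K : ℕ} (hK : p ^ E ∣ K * p ^ f) :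
    (K : ZMod (p ^ E)) * ((1 + p ^ f : ℕ) - 1) = 0 := by
  rw [Nat.cast_add, Nat.cast_one, add_sub_cancel_left]
  exact_mod_cast (ZMod.natCast_eq_zero_iff _ _).mpr hK

end PrimePower

namespace MetacyclicGroup

variable {p E N K f : ℕ}

theorem card_of_prime_pow (hp : 1 < p) (hf : 1 ≤ f) (hN : 1 ≤ N) (hE : E ≤ f + N)
    (hK : p ^ E ∣ K * p ^ f) :
    Nat.card (MetacyclicGroup (p ^ E) (p ^ N) K (1 + p ^ f)) = p ^ (N + E) := by
  rw [card (Nat.one_lt_pow (by omega) hp) (one_add_pow_pow_eq_one hf hE)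
    (natCast_mul_one_add_pow_sub_one hK) (by positivity), pow_add]

theorem exponent_dvd_of_prime_pow (hp : 1 < p) (hf : 1 ≤ f) {n : ℕ} (hNn : N ≤ n) (hEn : E ≤ n)
    (hK : p ^ E ∣ K * p ^ (n - N)) :
    Monoid.exponent (MetacyclicGroup (p ^ E) (p ^ N) K (1 + p ^ f)) ∣ p ^ n :=
  Metacyclic.exponent_dvd_of_dvd_geom_sum (by positivity) (by positivity) a_pow_P b_pow_Q
    inv_b_mul_a_mul_b closure_a_b (pow_dvd_pow p hNn) (by rwa [Nat.pow_div hNn (by omega)])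
    (dvd_geom_sum_one_add_pow hf hEn)

theorem card_abelianization_of_prime_pow (hp : 1 < p) (hfE : f ≤ E) (hKf : p ^ f ∣ K) :
    Nat.card (Abelianization (MetacyclicGroup (p ^ E) (p ^ N) K (1 + p ^ f))) = p ^ (f + N) := by
  have : NeZero (p ^ f) := ⟨by positivity⟩
  have : NeZero (p ^ N) := ⟨by positivity⟩
  rw [card_abelianization (pow_dvd_pow p hfE) hKf, pow_add]

theorem exponent_abelianization_of_prime_pow (hp : 1 < p) (hfE : f ≤ E) (hKf : p ^ f ∣ K) :
    Monoid.exponent (Abelianization (MetacyclicGroup (p ^ E) (p ^ N) K (1 + p ^ f))) =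
      p ^ max f N := by
  have : NeZero (p ^ f) := ⟨by positivity⟩
  have : NeZero (p ^ N) := ⟨by positivity⟩
  rw [exponent_abelianization (pow_dvd_pow p hfE) hKf]
  rcases le_total f N with h | h
  · rw [max_eq_right h, (lcm_eq_right_iff _ _ (normalize_eq _)).mpr (pow_dvd_pow p h)]
  · rw [max_eq_left h, (lcm_eq_left_iff _ _ (normalize_eq _)).mpr (pow_dvd_pow p h)]

end MetacyclicGroup

noncomputable def isoInvariants (G : Type*) [Group G] : ℕ × ℕ × ℕ × ℕ :=
  (Nat.card G, Monoid.exponent G, Nat.card (Abelianization G), Monoid.exponent (Abelianization G))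

theorem MulEquiv.isoInvariants_eq {G H : Type*} [Group G] [Group H] (e : G ≃* H) :
    isoInvariants G = isoInvariants H := by
  rw [isoInvariants, isoInvariants, Nat.card_congr e.toEquiv, Monoid.exponent_eq_of_mulEquiv e,
    Nat.card_congr e.abelianizationCongr.toEquiv,
    Monoid.exponent_eq_of_mulEquiv e.abelianizationCongr]

theorem exponents_eq_of_mulEquiv {p : ℕ} (hp : 1 < p) {G H : Type*} [Group G] [Group H]
    (e : G ≃* H) {k l m n k' l' m' n' : ℕ} (hG : isoInvariants G = (p ^ k, p ^ l, p ^ m, p ^ n))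
    (hH : isoInvariants H = (p ^ k', p ^ l', p ^ m', p ^ n')) :
    k = k' ∧ l = l' ∧ m = m' ∧ n = n' := by
  have h := hG.symm.trans (e.isoInvariants_eq.trans hH)
  simpa only [Prod.mk.injEq, (Nat.pow_right_injective hp).eq_iff] using h

open MetacyclicGroup

variable {p d e h f : ℕ}

theorem M1rels_eq : M1rels p d e f = metacyclicRels (p ^ e) (p ^ d) 0 (1 + p ^ f) := by
  simp [M1rels, metacyclicRels]

theorem M2rels_eq : M2rels p d e f = metacyclicRels (p ^ d) (p ^ e) 0 (1 + p ^ f) := by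
  simp [M2rels, metacyclicRels]

theorem isoInvariants_M1 (hp : 1 < p) (hc : Cond1 d e f) :
    isoInvariants (M1 p d e f) = (p ^ (d + e), p ^ e, p ^ (f + d), p ^ max f d) := by
  obtain ⟨hd, hf, hfe, hde, hedf⟩ : 1 ≤ d ∧ 1 ≤ f ∧ f ≤ e ∧ d ≤ e ∧ e ≤ f + d := by
    unfold Cond1 at hc; omega
  have hK : p ^ e ∣ 0 * p ^ f := by simp
  unfold M1
  rw [M1rels_eq, isoInvariants, Prod.mk.injEq, Prod.mk.injEq, Prod.mk.injEq]
  refine ⟨card_of_prime_pow hp hf hd hedf hK, Nat.dvd_antisymm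
    (exponent_dvd_of_prime_pow hp hf hde le_rfl (by simp)) ?_,
    card_abelianization_of_prime_pow hp hfe (dvd_zero _),
    exponent_abelianization_of_prime_pow hp hfe (dvd_zero _)⟩
  calc p ^ e = orderOf (a : MetacyclicGroup (p ^ e) (p ^ d) 0 (1 + p ^ f)) :=
        (orderOf_a (Nat.one_lt_pow (by omega) hp) (one_add_pow_pow_eq_one hf hedf)
          (natCast_mul_one_add_pow_sub_one hK)).symm
    _ ∣ _ := Monoid.order_dvd_exponent a

theorem isoInvariants_M2 (hp : 1 < p) (hc : Cond2 d e f) :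
    isoInvariants (M2 p d e f) = (p ^ (e + d), p ^ e, p ^ (f + e), p ^ max f e) := by
  obtain ⟨he, hf, hfd, hde, hdfe⟩ : 1 ≤ e ∧ 1 ≤ f ∧ f ≤ d ∧ d ≤ e ∧ d ≤ f + e := by
    unfold Cond2 at hc; omega
  have hK : p ^ d ∣ 0 * p ^ f := by simp
  unfold M2
  rw [M2rels_eq, isoInvariants, Prod.mk.injEq, Prod.mk.injEq, Prod.mk.injEq]
  refine ⟨card_of_prime_pow hp hf he hdfe hK, Nat.dvd_antisymm
    (exponent_dvd_of_prime_pow hp hf le_rfl hde (by simp)) ?_,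
    card_abelianization_of_prime_pow hp hfd (dvd_zero _),
    exponent_abelianization_of_prime_pow hp hfd (dvd_zero _)⟩
  exact (dvd_of_b_pow_eq_one (Nat.one_lt_pow (by omega) hp) (one_add_pow_pow_eq_one hf hdfe)
    (natCast_mul_one_add_pow_sub_one hK) (Monoid.pow_exponent_eq_one b)).1

theorem isoInvariants_M3 (hp : 1 < p) (hc : Cond3 d e h f) :
    isoInvariants (M3 p d e h f) =
      (p ^ (d + e - h + h), p ^ e, p ^ (f + (d + e - h)), p ^ max f (d + e - h)) := by
  unfold Cond3 at hc
  change isoInvariants (MetacyclicGroup (p ^ h) (p ^ (d + e - h)) (p ^ d) (1 + p ^ f)) = _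
  have hK : p ^ h ∣ p ^ d * p ^ f := by rw [← pow_add]; exact pow_dvd_pow p (by omega)
  have hfh : f ≤ h := by omega
  have hKf : p ^ f ∣ p ^ d := pow_dvd_pow p (by omega)
  rw [isoInvariants, Prod.mk.injEq, Prod.mk.injEq, Prod.mk.injEq]
  refine ⟨card_of_prime_pow hp (by omega) (by omega) (by omega) hK, Nat.dvd_antisymm
    (exponent_dvd_of_prime_pow hp (by omega) (by omega) (by omega) ?_) ?_,
    card_abelianization_of_prime_pow hp hfh hKf, exponent_abelianization_of_prime_pow hp hfh hKf⟩
  · rw [← pow_add]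
    exact pow_dvd_pow p (by omega)
  · obtain ⟨⟨s, hs⟩, hsK⟩ := dvd_of_b_pow_eq_one (Q := p ^ (d + e - h))
      (Nat.one_lt_pow (by omega) hp) (one_add_pow_pow_eq_one (by omega) (by omega))
      (natCast_mul_one_add_pow_sub_one hK) (Monoid.pow_exponent_eq_one b)
    rw [hs, Nat.mul_div_cancel_left s (by positivity),
      show h = d + (h - d) by omega, pow_add] at hsK
    rw [hs, show p ^ e = p ^ (d + e - h) * p ^ (h - d) by rw [← pow_add]; congr 1; omega]
    exact mul_dvd_mul_left _ (Nat.dvd_of_mul_dvd_mul_left (by positivity) hsK)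

theorem stmt_3_general (p : ℕ) (hp : p.Prime) :
    (∀ d e f d' e' f', Cond1 d e f → Cond1 d' e' f' →
      Nonempty (M1 p d e f ≃* M1 p d' e' f') → d = d' ∧ e = e' ∧ f = f') ∧
    (∀ d e f d' e' f', Cond2 d e f → Cond2 d' e' f' →
      Nonempty (M2 p d e f ≃* M2 p d' e' f') → d = d' ∧ e = e' ∧ f = f') ∧
    (∀ d e h f d' e' h' f', Cond3 d e h f → Cond3 d' e' h' f' →
      Nonempty (M3 p d e h f ≃* M3 p d' e' h' f') → d = d' ∧ e = e' ∧ h = h' ∧ f = f') ∧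
    (∀ d e f d' e' f', Cond1 d e f → Cond2 d' e' f' →
      ¬ Nonempty (M1 p d e f ≃* M2 p d' e' f')) ∧
    (∀ d e f d' e' h' f', Cond1 d e f → Cond3 d' e' h' f' →
      ¬ Nonempty (M1 p d e f ≃* M3 p d' e' h' f')) ∧
    (∀ d e f d' e' h' f', Cond2 d e f → Cond3 d' e' h' f' →
      ¬ Nonempty (M2 p d e f ≃* M3 p d' e' h' f')) := by
  have hp1 := hp.one_lt
  refine ⟨?_, ?_, ?_, ?_, ?_, ?_⟩
  · rintro d e f d' e' f' hc hc' ⟨iso⟩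
    have := exponents_eq_of_mulEquiv hp1 iso (isoInvariants_M1 hp1 hc) (isoInvariants_M1 hp1 hc')
    unfold Cond1 at hc hc'; omega
  · rintro d e f d' e' f' hc hc' ⟨iso⟩
    have := exponents_eq_of_mulEquiv hp1 iso (isoInvariants_M2 hp1 hc) (isoInvariants_M2 hp1 hc')
    unfold Cond2 at hc hc'; omega
  · rintro d e h f d' e' h' f' hc hc' ⟨iso⟩
    have := exponents_eq_of_mulEquiv hp1 iso (isoInvariants_M3 hp1 hc) (isoInvariants_M3 hp1 hc')
    unfold Cond3 at hc hc'; omega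
  · rintro d e f d' e' f' hc hc' ⟨iso⟩
    have := exponents_eq_of_mulEquiv hp1 iso (isoInvariants_M1 hp1 hc) (isoInvariants_M2 hp1 hc')
    unfold Cond1 Cond2 at *; omega
  · rintro d e f d' e' h' f' hc hc' ⟨iso⟩
    have := exponents_eq_of_mulEquiv hp1 iso (isoInvariants_M1 hp1 hc) (isoInvariants_M3 hp1 hc')
    unfold Cond1 Cond3 at *; omega
  · rintro d e f d' e' h' f' hc hc' ⟨iso⟩
    have := exponents_eq_of_mulEquiv hp1 iso (isoInvariants_M2 hp1 hc) (isoInvariants_M3 hp1 hc')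
    unfold Cond2 Cond3 at *; omega

/-- For an odd prime `p`, the groups `M₁(p,d,e,f)`, `M₂(p,d,e,f)` and
`M₃(p,d,e,h,f)` with parameters in the respective ranges are pairwise non-isomorphic:
two of them are isomorphic only if they lie in the same family with identical parameters. -/
theorem stmt_3 (p : ℕ) (hp : p.Prime) (hodd : Odd p) :
    (∀ d e f d' e' f', Cond1 d e f → Cond1 d' e' f' →
      Nonempty (M1 p d e f ≃* M1 p d' e' f') → d = d' ∧ e = e' ∧ f = f') ∧
    (∀ d e f d' e' f', Cond2 d e f → Cond2 d' e' f' →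
      Nonempty (M2 p d e f ≃* M2 p d' e' f') → d = d' ∧ e = e' ∧ f = f') ∧
    (∀ d e h f d' e' h' f', Cond3 d e h f → Cond3 d' e' h' f' →
      Nonempty (M3 p d e h f ≃* M3 p d' e' h' f') → d = d' ∧ e = e' ∧ h = h' ∧ f = f') ∧
    (∀ d e f d' e' f', Cond1 d e f → Cond2 d' e' f' →
      ¬ Nonempty (M1 p d e f ≃* M2 p d' e' f')) ∧
    (∀ d e f d' e' h' f', Cond1 d e f → Cond3 d' e' h' f' →
      ¬ Nonempty (M1 p d e f ≃* M3 p d' e' h' f')) ∧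
    (∀ d e f d' e' h' f', Cond2 d e f → Cond3 d' e' h' f' →
      ¬ Nonempty (M2 p d e f ≃* M3 p d' e' h' f')) :=
  stmt_3_general p hp
end

section
/- Let p be an odd prime and let d, e, f be positive integers with f ≤ e ≤ d + f, and let G = M₁(p,d,e,f) with canonical generators a, b. Then G is p^{e−f}-abelian, i.e. (xy)^{p^{e−f}} = x^{p^{e−f}} y^{p^{e−f}} for all x, y ∈ G, and the center of G equals the subgroup generated by a^{p^{e−f}} and b^{p^{e−f}}. -/
/-! Write `r = 1 + p^f`, so that `b⁻¹ab = a^r` and every element of `M₁` has the form `b^j a^i`.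
Letting `a` act on `ℤ/p^e` by translation and `b` by multiplication with `r⁻¹` shows that `a` has
order exactly `p^e`. Hence `b^j a^i` is central iff `r^j ≡ 1` and `i r ≡ i (mod p^e)`, which by
lifting the exponent (`v_p(r^j - 1) = f + v_p(j)` for odd `p`) means `p^(e-f) ∣ j, i`.
For `n = p^(e-f)` one has `(b^j a^i)^n = b^(jn) a^(i(1 + r^j + ⋯ + r^(j(n-1))))`, and for odd `p`
this geometric sum is `≡ n (mod p^e)`; so `(b^j a^i)^n = b^(jn) a^(in)`, and since `n r^l ≡ n`,
the twist by `r^l` in `xy` is invisible after raising to the `n`-th power. -/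

open Finset

section GeomSum

variable {R : Type*} [CommRing R]

theorem geom_sum_range_mul_s4 (x : R) (m n : ℕ) :
    ∑ t ∈ range (m * n), x ^ t = (∑ t ∈ range m, x ^ t) * ∑ s ∈ range n, (x ^ m) ^ s := by
  induction n with
  | zero => simp
  | succ n ih =>
    rw [Nat.mul_succ, sum_range_add, ih, sum_range_succ, mul_add, ← pow_mul]
    simp only [pow_add, ← mul_sum]
    ring

theorem sq_sub_one_dvd_geom_sum_sub (y : R) (m : ℕ) :
    (y - 1) ^ 2 ∣ ∑ s ∈ range m, y ^ s - m - (y - 1) * ∑ s ∈ range m, (s : R) := by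
  have key : ∀ s ∈ range m, (y - 1) ^ 2 ∣ y ^ s - (y - 1) * s - 1 := fun s _ ↦ by
    simpa using sq_dvd_add_pow_sub_sub (y - 1) 1 s
  convert dvd_sum key using 1
  simp only [sum_sub_distrib, mul_sum, sum_const, card_range, nsmul_one]
  ring

theorem pow_succ_dvd_geom_sum_sub {p : ℕ} (hp : Odd p) {m : ℕ} (hm : 0 < m) {y : R}
    (hy : (p : R) ^ m ∣ y - 1) : (p : R) ^ (m + 1) ∣ ∑ s ∈ range p, y ^ s - p := by
  obtain ⟨C, hC⟩ := sq_sub_one_dvd_geom_sum_sub y p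
  have hsum : (p : R) ∣ ∑ s ∈ range p, (s : R) := by
    obtain ⟨k, rfl⟩ := hp
    have h : ∑ s ∈ range (2 * k + 1), s = (2 * k + 1) * k :=
      Nat.eq_of_mul_eq_mul_right two_pos (by rw [sum_range_id_mul_two, Nat.add_sub_cancel]; ring)
    exact ⟨k, by rw [← Nat.cast_sum, h]; push_cast; ring⟩
  have hlin : (p : R) ^ (m + 1) ∣ (y - 1) * ∑ s ∈ range p, (s : R) := by
    rw [pow_succ]; exact mul_dvd_mul hy hsum
  have hsq : (p : R) ^ (m + 1) ∣ (y - 1) ^ 2 :=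
    (pow_dvd_pow (p : R) (by omega : m + 1 ≤ m * 2)).trans
      (by rw [pow_mul]; exact pow_dvd_pow_of_dvd hy 2)
  have : ∑ s ∈ range p, y ^ s - p = (y - 1) * ∑ s ∈ range p, (s : R) + (y - 1) ^ 2 * C := by
    linear_combination hC
  rw [this]
  exact dvd_add hlin (dvd_mul_of_dvd_left hsq C)

theorem pow_add_dvd_geom_sum_sub {p : ℕ} (hp : Odd p) {f : ℕ} (hf : 0 < f) {x : R}
    (hx : (p : R) ^ f ∣ x - 1) (k : ℕ) :
    (p : R) ^ (f + k) ∣ ∑ t ∈ range (p ^ k), x ^ t - (p : R) ^ k := by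
  induction k with
  | zero => simp
  | succ k ih =>
    obtain ⟨α, hα⟩ := ih
    have hy : (p : R) ^ (f + k) ∣ x ^ p ^ k - 1 := by
      rw [← geom_sum_mul, pow_add, mul_comm ((p : R) ^ f)]
      refine mul_dvd_mul ⟨1 + (p : R) ^ f * α, ?_⟩ hx
      linear_combination hα
    obtain ⟨β, hβ⟩ := pow_succ_dvd_geom_sum_sub hp (by omega) hy
    refine ⟨α + (p : R) ^ k * β + (p : R) ^ (f + k) * α * β, ?_⟩
    rw [pow_succ, geom_sum_range_mul_s4]
    linear_combination
      (∑ s ∈ range p, (x ^ p ^ k) ^ s) * hα + ((p : R) ^ k + (p : R) ^ (f + k) * α) * hβ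

end GeomSum

theorem prime_pow_dvd_one_add_pow_pow_sub_one_iff {p : ℕ} (hp : p.Prime) (hodd : Odd p) {f : ℕ}
    (hf : 0 < f) (e m : ℕ) : (p : ℤ) ^ e ∣ (1 + (p : ℤ) ^ f) ^ m - 1 ↔ p ^ (e - f) ∣ m := by
  rcases eq_or_ne m 0 with rfl | hm
  · simp
  have := Fact.mk hp
  have hx : 1 < 1 + p ^ f := by have := pow_pos hp.pos f; omega
  have hN : (1 + p ^ f) ^ m - 1 ≠ 0 := Nat.sub_ne_zero_of_lt (Nat.one_lt_pow hm hx)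
  have hndvd : ¬ p ∣ 1 + p ^ f := by
    rw [Nat.dvd_add_left (dvd_pow_self p hf.ne')]
    exact hp.not_dvd_one
  have hval := padicValNat.pow_sub_pow hodd hx
    (by rw [Nat.add_sub_cancel_left]; exact dvd_pow_self p hf.ne') hndvd hm
  rw [one_pow, Nat.add_sub_cancel_left, padicValNat.prime_pow] at hval
  have hcast : (1 + (p : ℤ) ^ f) ^ m - 1 = (((1 + p ^ f) ^ m - 1 : ℕ) : ℤ) := by
    rw [Nat.cast_sub (Nat.one_le_pow _ _ (by omega))]
    push_cast; ring
  rw [hcast, ← Nat.cast_pow, Int.natCast_dvd_natCast, padicValNat_dvd_iff_le hN,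
    padicValNat_dvd_iff_le hm, hval]
  omega

section MetacyclicRelation

variable {G : Type*} [Group G] {a b : G} {r : ℤ}

theorem Commute.mul_left_iff_of_right {x y z : G} (h : Commute y z) :
    Commute (x * y) z ↔ Commute x z :=
  ⟨fun hxy ↦ by simpa using hxy.mul_left h.inv_left, fun hx ↦ hx.mul_left h⟩

theorem Commute.mul_left_iff_of_left {x y z : G} (h : Commute x z) :
    Commute (x * y) z ↔ Commute y z :=
  ⟨fun hxy ↦ by simpa using h.inv_left.mul_left hxy, fun hy ↦ h.mul_left hy⟩

theorem mem_center_iff_of_closure_pair_eq_top (hG : Subgroup.closure {a, b} = ⊤) {g : G} :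
    g ∈ Subgroup.center G ↔ Commute g a ∧ Commute g b := by
  rw [← Subgroup.centralizer_univ, ← Subgroup.coe_top, ← hG, Subgroup.centralizer_closure,
    Subgroup.mem_centralizer_iff]
  simp only [Set.mem_insert_iff, Set.mem_singleton_iff, forall_eq_or_imp, forall_eq]
  exact and_congr eq_comm eq_comm

variable (hab : b⁻¹ * a * b = a ^ r)
include hab

theorem zpow_mul_eq_mul_zpow (i : ℤ) : a ^ i * b = b * a ^ (i * r) := by
  have hconj : b⁻¹ * a ^ i * b = a ^ (i * r) := by
    simpa [hab, ← zpow_mul, mul_comm] using (conj_zpow (a := b⁻¹) (b := a) (i := i)).symm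
  rw [← hconj]
  group

theorem zpow_mul_pow_eq_pow_mul_zpow (i : ℤ) (j : ℕ) :
    a ^ i * b ^ j = b ^ j * a ^ (i * r ^ j) := by
  induction j generalizing i with
  | zero => simp
  | succ j ih =>
    rw [pow_succ', ← mul_assoc, zpow_mul_eq_mul_zpow hab, mul_assoc, ih, ← mul_assoc, pow_succ',
      mul_assoc i, mul_comm r]

theorem pow_mul_zpow_mul_pow_mul_zpow (j l : ℕ) (i k : ℤ) :
    b ^ j * a ^ i * (b ^ l * a ^ k) = b ^ (j + l) * a ^ (i * r ^ l + k) := by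
  rw [mul_assoc, ← mul_assoc (a ^ i), zpow_mul_pow_eq_pow_mul_zpow hab, pow_add, zpow_add]
  group

theorem pow_mul_zpow_pow (j : ℕ) (i : ℤ) (m : ℕ) :
    (b ^ j * a ^ i) ^ m = b ^ (j * m) * a ^ (i * ∑ t ∈ range m, (r ^ j) ^ t) := by
  induction m with
  | zero => simp
  | succ m ih =>
    rw [pow_succ, ih, pow_mul_zpow_mul_pow_mul_zpow hab, geom_sum_succ]
    congr 2
    ring

theorem exists_eq_pow_mul_zpow (hb : IsOfFinOrder b) (hG : Subgroup.closure {a, b} = ⊤)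
    (g : G) : ∃ (j : ℕ) (i : ℤ), g = b ^ j * a ^ i := by
  have hg : g ∈ Subgroup.closure {a, b} := hG ▸ Subgroup.mem_top g
  induction hg using Subgroup.closure_induction with
  | mem x hx =>
    rcases hx with rfl | rfl
    · exact ⟨0, 1, by simp⟩
    · exact ⟨1, 0, by simp⟩
  | one => exact ⟨0, 0, by simp⟩
  | mul x y _ _ hx hy =>
    obtain ⟨j, i, rfl⟩ := hx
    obtain ⟨l, k, rfl⟩ := hy
    exact ⟨j + l, i * r ^ l + k, pow_mul_zpow_mul_pow_mul_zpow hab j l i k⟩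
  | inv x _ hx =>
    obtain ⟨j, i, rfl⟩ := hx
    obtain ⟨l, hl⟩ : (b ^ j)⁻¹ ∈ Submonoid.powers b :=
      hb.mem_powers_iff_mem_zpowers.2 (Subgroup.inv_mem _ (Subgroup.npow_mem_zpowers b j))
    refine ⟨l, -i * r ^ l, ?_⟩
    rw [mul_inv_rev, ← hl, ← zpow_neg, zpow_mul_pow_eq_pow_mul_zpow hab]

theorem commute_zpow_left_iff (i : ℤ) : Commute (a ^ i) b ↔ a ^ (i * r) = a ^ i := by
  rw [Commute, SemiconjBy, zpow_mul_eq_mul_zpow hab, mul_right_inj]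

theorem commute_pow_left_iff (j : ℕ) : Commute (b ^ j) a ↔ a ^ r ^ j = a := by
  have h := zpow_mul_pow_eq_pow_mul_zpow hab 1 j
  rw [zpow_one, one_mul] at h
  rw [Commute, SemiconjBy, h, mul_right_inj, eq_comm]

theorem pow_mul_zpow_mem_center_iff (hG : Subgroup.closure {a, b} = ⊤) (j : ℕ) (i : ℤ) :
    b ^ j * a ^ i ∈ Subgroup.center G ↔ a ^ r ^ j = a ∧ a ^ (i * r) = a ^ i := by
  rw [mem_center_iff_of_closure_pair_eq_top hG,
    Commute.mul_left_iff_of_right ((Commute.refl a).zpow_left i),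
    Commute.mul_left_iff_of_left ((Commute.refl b).pow_left j),
    commute_pow_left_iff hab, commute_zpow_left_iff hab]

end MetacyclicRelation

namespace M1

variable {p d e f : ℕ}

theorem a_pow_eq_one : M1a p d e f ^ p ^ e = 1 := by
  have h := PresentedGroup.one_of_mem
    (show FreeGroup.of 0 ^ p ^ e ∈ M1rels p d e f from Set.mem_insert _ _)
  rw [map_pow] at h
  exact h

theorem b_pow_eq_one : M1b p d e f ^ p ^ d = 1 := by
  have h := PresentedGroup.one_of_mem
    (show FreeGroup.of 1 ^ p ^ d ∈ M1rels p d e f from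
      Set.mem_insert_of_mem _ (Set.mem_insert _ _))
  rw [map_pow] at h
  exact h

theorem b_inv_mul_a_mul_b :
    (M1b p d e f)⁻¹ * M1a p d e f * M1b p d e f = M1a p d e f ^ (1 + (p : ℤ) ^ f) := by
  have h := PresentedGroup.mk_eq_mk_of_mul_inv_mem
    (show (FreeGroup.of 1)⁻¹ * FreeGroup.of 0 * FreeGroup.of 1 * (FreeGroup.of 0 ^ (1 + p ^ f))⁻¹
      ∈ M1rels p d e f from Set.mem_insert_of_mem _ (Set.mem_insert_of_mem _ rfl))
  rw [map_mul, map_mul, map_inv, map_pow] at h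
  rw [← Nat.cast_one, ← Nat.cast_pow, ← Nat.cast_add, zpow_natCast]
  exact h

theorem closure_a_b : Subgroup.closure {M1a p d e f, M1b p d e f} = ⊤ := by
  rw [← PresentedGroup.closure_range_of]
  congr 1
  ext x
  simp [Fin.exists_fin_two, M1a, M1b, eq_comm]

theorem exists_eq_b_pow_mul_a_zpow (hp : 0 < p) (g : M1 p d e f) :
    ∃ (j : ℕ) (i : ℤ), g = M1b p d e f ^ j * M1a p d e f ^ i :=
  exists_eq_pow_mul_zpow b_inv_mul_a_mul_b
    (isOfFinOrder_iff_pow_eq_one.2 ⟨p ^ d, pow_pos hp d, b_pow_eq_one⟩) closure_a_b g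

theorem exists_hom_perm_zmod (hp : p.Prime) (hodd : Odd p) (hf : 0 < f) (hedf : e ≤ d + f) :
    ∃ φ : M1 p d e f →* Equiv.Perm (ZMod (p ^ e)), φ (M1a p d e f) = Equiv.addLeft 1 := by
  have hu : (1 + (p : ZMod (p ^ e)) ^ f) ^ p ^ d = 1 := by
    have h := (prime_pow_dvd_one_add_pow_pow_sub_one_iff hp hodd hf e (p ^ d)).2
      (pow_dvd_pow p (by omega))
    rw [← Nat.cast_pow, ← ZMod.intCast_zmod_eq_zero_iff_dvd] at h
    push_cast at h
    exact sub_eq_zero.1 h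
  obtain ⟨U, hU, hUpow⟩ : ∃ U : (ZMod (p ^ e))ˣ,
      U • (1 : ZMod (p ^ e)) = 1 + (p : ZMod (p ^ e)) ^ f ∧ U ^ p ^ d = 1 :=
    ⟨Units.ofPowEqOne _ _ hu (pow_ne_zero _ hp.ne_zero), mul_one _, Units.pow_ofPowEqOne _ _⟩
  let F : Fin 2 → Equiv.Perm (ZMod (p ^ e)) :=
    ![Equiv.addLeft 1, MulAction.toPermHom _ _ U⁻¹]
  refine ⟨PresentedGroup.toGroup (f := F) ?_, PresentedGroup.toGroup.of _⟩
  rintro r (rfl | rfl | rfl)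
  · simp [F, Equiv.nsmul_addLeft]
  · rw [map_pow, FreeGroup.lift_apply_of]
    change MulAction.toPermHom _ _ U⁻¹ ^ p ^ d = 1
    rw [← map_pow, inv_pow, hUpow, inv_one, map_one]
  · ext x
    simp [F, Equiv.Perm.mul_apply, smul_add, hU]

theorem orderOf_a (hp : p.Prime) (hodd : Odd p) (hf : 0 < f) (hedf : e ≤ d + f) :
    orderOf (M1a p d e f) = p ^ e := by
  obtain ⟨φ, hφ⟩ := exists_hom_perm_zmod hp hodd hf hedf
  refine Nat.dvd_antisymm (orderOf_dvd_of_pow_eq_one a_pow_eq_one) ?_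
  have h := congrArg (fun σ ↦ σ 0) (congrArg φ (pow_orderOf_eq_one (M1a p d e f)))
  simp only [map_pow, hφ, Equiv.nsmul_addLeft, map_one] at h
  simpa [ZMod.natCast_eq_zero_iff] using h

theorem a_zpow_eq_a_zpow_iff (hp : p.Prime) (hodd : Odd p) (hf : 0 < f) (hedf : e ≤ d + f)
    {x y : ℤ} : M1a p d e f ^ x = M1a p d e f ^ y ↔ (p : ℤ) ^ e ∣ x - y := by
  rw [zpow_eq_zpow_iff_modEq, orderOf_a hp hodd hf hedf, Int.modEq_iff_dvd, dvd_sub_comm]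
  push_cast
  rfl

theorem b_pow_mul_a_zpow_mem_center_iff (hp : p.Prime) (hodd : Odd p) (hf : 0 < f)
    (hfe : f ≤ e) (hedf : e ≤ d + f) (j : ℕ) (i : ℤ) :
    M1b p d e f ^ j * M1a p d e f ^ i ∈ Subgroup.center (M1 p d e f) ↔
      p ^ (e - f) ∣ j ∧ (p : ℤ) ^ (e - f) ∣ i := by
  rw [pow_mul_zpow_mem_center_iff b_inv_mul_a_mul_b closure_a_b]
  nth_rw 2 [← zpow_one (M1a p d e f)]
  rw [a_zpow_eq_a_zpow_iff hp hodd hf hedf, a_zpow_eq_a_zpow_iff hp hodd hf hedf,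
    prime_pow_dvd_one_add_pow_pow_sub_one_iff hp hodd hf,
    show i * (1 + (p : ℤ) ^ f) - i = i * p ^ f by ring,
    ← Nat.sub_add_cancel hfe, pow_add, Nat.add_sub_cancel,
    mul_dvd_mul_iff_right (pow_ne_zero _ (Int.natCast_ne_zero.2 hp.ne_zero))]

theorem b_pow_mul_a_zpow_pow (hp : p.Prime) (hodd : Odd p) (hf : 0 < f) (hfe : f ≤ e)
    (hedf : e ≤ d + f) (j : ℕ) (i : ℤ) :
    (M1b p d e f ^ j * M1a p d e f ^ i) ^ p ^ (e - f) =
      M1b p d e f ^ (j * p ^ (e - f)) * M1a p d e f ^ (i * p ^ (e - f)) := by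
  rw [pow_mul_zpow_pow b_inv_mul_a_mul_b, mul_right_inj, a_zpow_eq_a_zpow_iff hp hodd hf hedf,
    ← mul_sub]
  refine Dvd.dvd.mul_left ?_ i
  have h := pow_add_dvd_geom_sum_sub hodd hf
    (by simpa using sub_one_dvd_pow_sub_one (1 + (p : ℤ) ^ f) j) (e - f)
  rwa [Nat.add_sub_cancel' hfe] at h

theorem mul_pow_prime_pow_sub (hp : p.Prime) (hodd : Odd p) (hf : 0 < f) (hfe : f ≤ e)
    (hedf : e ≤ d + f) (x y : M1 p d e f) :
    (x * y) ^ p ^ (e - f) = x ^ p ^ (e - f) * y ^ p ^ (e - f) := by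
  obtain ⟨j, i, rfl⟩ := exists_eq_b_pow_mul_a_zpow hp.pos x
  obtain ⟨l, k, rfl⟩ := exists_eq_b_pow_mul_a_zpow hp.pos y
  simp only [pow_mul_zpow_mul_pow_mul_zpow b_inv_mul_a_mul_b,
    b_pow_mul_a_zpow_pow hp hodd hf hfe hedf]
  rw [add_mul, mul_right_inj, a_zpow_eq_a_zpow_iff hp hodd hf hedf]
  have key : ∀ s, (p : ℤ) ^ e ∣ (p : ℤ) ^ (e - f) * ((1 + (p : ℤ) ^ f) ^ s - 1) := fun s ↦ by
    rw [← pow_sub_mul_pow _ hfe]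
    exact mul_dvd_mul_left _ (by simpa using sub_one_dvd_pow_sub_one (1 + (p : ℤ) ^ f) s)
  have h : (i * (1 + (p : ℤ) ^ f) ^ l + k) * p ^ (e - f) -
      (i * p ^ (e - f) * (1 + (p : ℤ) ^ f) ^ (l * p ^ (e - f)) + k * p ^ (e - f)) =
      i * ((p : ℤ) ^ (e - f) * ((1 + (p : ℤ) ^ f) ^ l - 1) -
        (p : ℤ) ^ (e - f) * ((1 + (p : ℤ) ^ f) ^ (l * p ^ (e - f)) - 1)) := by ring
  rw [h]
  exact dvd_mul_of_dvd_right (dvd_sub (key _) (key _)) i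

theorem center_eq_closure (hp : p.Prime) (hodd : Odd p) (hf : 0 < f) (hfe : f ≤ e)
    (hedf : e ≤ d + f) : Subgroup.center (M1 p d e f) =
      Subgroup.closure {M1a p d e f ^ p ^ (e - f), M1b p d e f ^ p ^ (e - f)} := by
  have hcenter := b_pow_mul_a_zpow_mem_center_iff hp hodd hf hfe hedf
  apply le_antisymm
  · intro z hz
    obtain ⟨j, i, rfl⟩ := exists_eq_b_pow_mul_a_zpow hp.pos z
    obtain ⟨⟨j, rfl⟩, ⟨i, rfl⟩⟩ := (hcenter _ _).1 hz
    rw [pow_mul, ← Nat.cast_pow, zpow_mul, zpow_natCast]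
    exact Subgroup.mul_mem _ (Subgroup.pow_mem _ (Subgroup.subset_closure (by simp)) _)
      (Subgroup.zpow_mem _ (Subgroup.subset_closure (by simp)) _)
  · rw [Subgroup.closure_le, Set.insert_subset_iff, Set.singleton_subset_iff]
    constructor
    · have h := (hcenter 0 (p ^ (e - f) : ℕ)).2 ⟨dvd_zero _, by simp⟩
      rwa [pow_zero, one_mul, zpow_natCast] at h
    · simpa using (hcenter (p ^ (e - f)) 0).2 ⟨dvd_rfl, dvd_zero _⟩

end M1

theorem stmt_4_general (p d e f : ℕ) (hp : p.Prime) (hodd : Odd p)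
    (hf : 0 < f) (hfe : f ≤ e) (hedf : e ≤ d + f) :
    (∀ x y : M1 p d e f, (x * y) ^ p ^ (e - f) = x ^ p ^ (e - f) * y ^ p ^ (e - f)) ∧
    Subgroup.center (M1 p d e f) =
      Subgroup.closure {M1a p d e f ^ p ^ (e - f), M1b p d e f ^ p ^ (e - f)} :=
  ⟨M1.mul_pow_prime_pow_sub hp hodd hf hfe hedf, M1.center_eq_closure hp hodd hf hfe hedf⟩

/-- For an odd prime `p` and positive `d, e, f` with `f ≤ e ≤ d + f`, the
group `G = M₁(p,d,e,f)` is `p^(e-f)`-abelian and its center is generated by `a^(p^(e-f))`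
and `b^(p^(e-f))`. -/
theorem stmt_4 (p d e f : ℕ) (hp : p.Prime) (hodd : Odd p)
    (hd : 0 < d) (hf : 0 < f) (hfe : f ≤ e) (hedf : e ≤ d + f) :
    (∀ x y : M1 p d e f, (x * y) ^ p ^ (e - f) = x ^ p ^ (e - f) * y ^ p ^ (e - f)) ∧
    Subgroup.center (M1 p d e f) =
      Subgroup.closure {M1a p d e f ^ p ^ (e - f), M1b p d e f ^ p ^ (e - f)} :=
  stmt_4_general p d e f hp hodd hf hfe hedf
end

section
/- Let p be an odd prime, let d, e, f be positive integers with 1 ≤ f < d < e, and let G = M₂(p,d,e,f) with canonical generators a, b. For integers i, j, k, l, set α = bⁱaʲ and β = bᵏaˡ. Then (α, β) is an exact (p^d, p^e)-bicyclic pair of G if and only if p^{e−d} ∣ i and p ∤ jk. -/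
/-!
Write the elements of `M₂(p,d,e,f)` in the normal form `bʸaˣ` with `x` mod `p^d` and `y` mod `p^e`.
With `r = 1 + p^f`, the `n`-th power of `bⁱaʲ` is `bⁿⁱ a^{j(1 + q + ⋯ + qⁿ⁻¹)}` where `q = rⁱ ≡ 1`
(mod `p`), and by lifting the exponent this geometric sum has the same `p`-adic valuation as `n`.
Hence `(bⁱaʲ)ⁿ = 1` iff `p^d ∣ jn` and `p^e ∣ ni`, exactly as in `ℤ/p^d × ℤ/p^e`; this gives the
orders of `α` and `β`. When `p ∤ k`, the subgroup of order `p` of `⟨β⟩` lies in `⟨b⟩`, so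
`⟨α⟩ ∩ ⟨β⟩ = 1` as soon as `⟨α⟩ ∩ ⟨b⟩ = 1`, which is the case when `p ∤ j`; when `p ∣ j`,
instead, `α^{p^{d-1}} ≠ 1` is a power of `b^{p^{e-1}}`, hence of `β^{p^{e-1}}`. Finally
`⟨α⟩⟨β⟩ = G` by counting.
-/

open Finset Subgroup

theorem emultiplicity_geom_sum_of_dvd_sub_one {p : ℕ} (hp : p.Prime) (hodd : Odd p) {q : ℤ}
    (hq : (p : ℤ) ∣ q - 1) (k : ℕ) :
    emultiplicity (p : ℤ) (∑ t ∈ range k, q ^ t) = emultiplicity (p : ℤ) k := by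
  obtain rfl | hq1 := eq_or_ne q 1
  · simp
  have hpq : ¬ (p : ℤ) ∣ q := fun h =>
    hp.one_lt.ne' (Int.natCast_dvd_natCast.mp (by simpa using (dvd_sub h hq)) |> Nat.dvd_one.mp)
  have hLTE := Int.emultiplicity_pow_sub_pow hp hodd (y := 1) (by simpa using hq) hpq k
  rw [one_pow, ← geom_sum_mul, emultiplicity_mul (Nat.prime_iff_prime_int.mp hp),
    ← Int.natCast_emultiplicity, add_comm (emultiplicity _ (q - 1))] at hLTE
  have hfin : emultiplicity (p : ℤ) (q - 1) ≠ ⊤ :=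
    finiteMultiplicity_iff_emultiplicity_ne_top.1
      (Int.finiteMultiplicity_iff.2 ⟨by simpa using hp.one_lt.ne', sub_ne_zero.2 hq1⟩)
  exact WithTop.add_right_cancel hfin hLTE

theorem pow_dvd_mul_geom_sum_iff {p : ℕ} (hp : p.Prime) (hodd : Odd p) {q : ℤ}
    (hq : (p : ℤ) ∣ q - 1) (s : ℕ) (c : ℤ) (k : ℕ) :
    (p : ℤ) ^ s ∣ c * ∑ t ∈ range k, q ^ t ↔ (p : ℤ) ^ s ∣ c * k := by
  have hp' := Nat.prime_iff_prime_int.mp hp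
  rw [pow_dvd_iff_le_emultiplicity, pow_dvd_iff_le_emultiplicity, emultiplicity_mul hp',
    emultiplicity_mul hp', emultiplicity_geom_sum_of_dvd_sub_one hp hodd hq]

theorem isCoprime_pow_of_not_dvd {p : ℕ} (hp : p.Prime) {j : ℤ} (hj : ¬ (p : ℤ) ∣ j) (s : ℕ) :
    IsCoprime ((p : ℤ) ^ s) j :=
  ((Nat.prime_iff_prime_int.mp hp).coprime_iff_not_dvd.mpr hj).pow_left

theorem one_add_pow_pow_eq_one_s7 {p : ℕ} (hp : p.Prime) (hodd : Odd p) {d e f : ℕ} (hf : 0 < f)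
    (hd : d ≤ f + e) : (1 + (p : ZMod (p ^ d)) ^ f) ^ p ^ e = 1 := by
  have hq : (p : ℤ) ∣ (1 + (p : ℤ) ^ f) - 1 := by simpa using dvd_pow_self (p : ℤ) hf.ne'
  have key : (p : ℤ) ^ d ∣ (p : ℤ) ^ f * ∑ t ∈ range (p ^ e), (1 + (p : ℤ) ^ f) ^ t := by
    rw [pow_dvd_mul_geom_sum_iff hp hodd hq]
    exact_mod_cast pow_dvd_pow p hd |>.trans (by rw [pow_add])
  have h := (ZMod.intCast_eq_intCast_iff_dvd_sub 1 ((1 + (p : ℤ) ^ f) ^ p ^ e) (p ^ d)).mpr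
    (by rw [← geom_sum_mul, mul_comm]; simpa using key)
  simpa using h.symm

theorem pow_zmod_val_natCast {M : Type*} [Monoid M] {g : M} {N : ℕ} (hg : g ^ N = 1) (k : ℕ) :
    g ^ (k : ZMod N).val = g ^ k := by
  rw [ZMod.val_natCast, ← pow_eq_pow_mod _ hg]

theorem mul_pow_eq_pow_mul_pow_of_mul_eq {G : Type*} [Monoid G] {a b : G} {R : ℕ}
    (h : a * b = b * a ^ R) (x y : ℕ) : a ^ x * b ^ y = b ^ y * a ^ (x * R ^ y) := by
  induction y with
  | zero => simp
  | succ y ih =>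
    have hb : a ^ (x * R ^ y) * b = b * a ^ (x * R ^ y * R) := by
      rw [mul_comm (x * R ^ y) R, pow_mul a R]
      exact (SemiconjBy.pow_right h.symm _).symm
    rw [pow_succ, ← mul_assoc, ih, mul_assoc, hb, ← mul_assoc, pow_succ R, mul_assoc x]

theorem IsExactBicyclicPair.map_iff {G H : Type*} [Group G] [Group H] (φ : G ≃* H) {m n : ℕ}
    {α β : G} : IsExactBicyclicPair m n (φ α) (φ β) ↔ IsExactBicyclicPair m n α β := by
  have hinf : zpowers (φ α) ⊓ zpowers (φ β) = (zpowers α ⊓ zpowers β).map (φ : G →* H) := by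
    rw [map_inf _ _ _ φ.injective, MonoidHom.map_zpowers, MonoidHom.map_zpowers]; rfl
  simp only [IsExactBicyclicPair, MulEquiv.orderOf_eq, hinf,
    map_eq_bot_iff_of_injective _ (f := (φ : G →* H)) φ.injective, φ.surjective.forall]
  simp [← map_zpow, ← map_mul, φ.injective.eq_iff]

theorem mem_zpowers_pow_of_pow_eq_one {G : Type*} [Group G] {g z : G} {m q : ℕ}
    (hg : orderOf g = m * q) (hq : q ≠ 0) (hz : z ∈ zpowers g) (hzq : z ^ q = 1) :
    z ∈ zpowers (g ^ m) := by
  obtain ⟨n, rfl⟩ := hz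
  rw [← zpow_natCast, ← zpow_mul, ← orderOf_dvd_iff_zpow_eq_one, hg, Nat.cast_mul] at hzq
  obtain ⟨t, rfl⟩ := (mul_dvd_mul_iff_right (by exact_mod_cast hq)).mp hzq
  exact ⟨t, by simp [zpow_mul]⟩

/-- A nontrivial subgroup of the cyclic `p`-group `⟨β⟩` contains an element of order `p`, and all
of these lie in `⟨β ^ p ^ e⟩`. -/
theorem zpowers_inf_zpowers_eq_bot_of_pow_mem {G : Type*} [Group G] {p : ℕ} [hp : Fact p.Prime]
    {e : ℕ} {α β : G} {B : Subgroup G} (hβ : orderOf β = p ^ (e + 1)) (hβB : β ^ p ^ e ∈ B)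
    (hαB : zpowers α ⊓ B = ⊥) : zpowers α ⊓ zpowers β = ⊥ := by
  by_contra hne
  obtain ⟨k, -, hcard⟩ := (Nat.dvd_prime_pow hp.out).mp
    ((card_dvd_of_le (inf_le_right : zpowers α ⊓ zpowers β ≤ _)).trans
      (by rw [Nat.card_zpowers, hβ]))
  have : Finite (zpowers α ⊓ zpowers β : Subgroup G) :=
    Nat.finite_of_card_ne_zero (by rw [hcard]; exact pow_ne_zero _ hp.out.ne_zero)
  have hdvd : p ∣ Nat.card (zpowers α ⊓ zpowers β : Subgroup G) := by
    rw [hcard]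
    refine dvd_pow_self p fun hk0 => hne ?_
    rwa [hk0, pow_zero, Subgroup.card_eq_one] at hcard
  obtain ⟨z, hz⟩ := exists_prime_orderOf_dvd_card' p hdvd
  obtain ⟨hzα, hzβ⟩ := mem_inf.mp z.2
  rw [← orderOf_coe] at hz
  have hzB : (z : G) ∈ B := zpowers_le.mpr hβB
    (mem_zpowers_pow_of_pow_eq_one (by rw [hβ, pow_succ]) hp.out.ne_zero hzβ
      (hz ▸ pow_orderOf_eq_one (z : G)))
  have hz1 : (z : G) = 1 := by simpa [hαB] using mem_inf.mpr ⟨hzα, hzB⟩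
  exact hp.out.ne_one (by rw [← hz, hz1, orderOf_one])

theorem exists_zpow_mul_zpow_of_orderOf_mul {G : Type*} [Group G] [Finite G] {α β : G}
    (hcard : orderOf α * orderOf β = Nat.card G) (hαβ : zpowers α ⊓ zpowers β = ⊥) (g : G) :
    ∃ i j : ℤ, g = α ^ i * β ^ j := by
  rw [← Nat.card_zpowers, ← Nat.card_zpowers] at hcard
  obtain ⟨⟨⟨_, i, rfl⟩, ⟨_, j, rfl⟩⟩, hij⟩ :=
    (isComplement'_of_card_mul_and_disjoint hcard (disjoint_iff.mpr hαβ)).existsUnique g |>.exists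
  exact ⟨i, j, hij.symm⟩

/-- `⟨x, y⟩` stands for `bʸaˣ`, where `b⁻¹ab = aʳ`. -/
@[ext]
structure SplitMetacyclic (n m : ℕ) (r : ZMod n) where
  x : ZMod n
  y : ZMod m

namespace SplitMetacyclic

variable {n m : ℕ} {r : ZMod n}

instance : One (SplitMetacyclic n m r) := ⟨⟨0, 0⟩⟩
instance : Mul (SplitMetacyclic n m r) := ⟨fun g h => ⟨r ^ h.y.val * g.x + h.x, g.y + h.y⟩⟩
instance : Inv (SplitMetacyclic n m r) := ⟨fun g => ⟨-(r ^ (-g.y).val * g.x), -g.y⟩⟩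

@[simp] lemma one_x : (1 : SplitMetacyclic n m r).x = 0 := rfl
@[simp] lemma one_y : (1 : SplitMetacyclic n m r).y = 0 := rfl
@[simp] lemma mul_x (g h : SplitMetacyclic n m r) : (g * h).x = r ^ h.y.val * g.x + h.x := rfl
@[simp] lemma mul_y (g h : SplitMetacyclic n m r) : (g * h).y = g.y + h.y := rfl
@[simp] lemma inv_x (g : SplitMetacyclic n m r) : g⁻¹.x = -(r ^ (-g.y).val * g.x) := rfl
@[simp] lemma inv_y (g : SplitMetacyclic n m r) : g⁻¹.y = -g.y := rfl

def equivProd : SplitMetacyclic n m r ≃ ZMod n × ZMod m :=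
  ⟨fun g => (g.x, g.y), fun z => ⟨z.1, z.2⟩, fun _ => rfl, fun _ => rfl⟩

instance [NeZero n] [NeZero m] : Finite (SplitMetacyclic n m r) :=
  Finite.of_equiv _ equivProd.symm

lemma card_eq : Nat.card (SplitMetacyclic n m r) = n * m := by
  rw [Nat.card_congr equivProd, Nat.card_prod, Nat.card_zmod, Nat.card_zmod]

variable [NeZero m] [hr : Fact (r ^ m = 1)]

lemma pow_val_add (y z : ZMod m) : r ^ (y + z).val = r ^ y.val * r ^ z.val := by
  rw [ZMod.val_add, ← pow_add, ← pow_eq_pow_mod _ hr.out]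

instance : Group (SplitMetacyclic n m r) where
  mul_assoc g h k := by ext <;> simp only [mul_x, mul_y, pow_val_add] <;> ring
  one_mul g := by ext <;> simp
  mul_one g := by ext <;> simp
  inv_mul_cancel g := by
    ext
    · rw [mul_x, inv_x, one_x, mul_neg, ← mul_assoc, ← pow_val_add, add_neg_cancel,
        ZMod.val_zero, pow_zero, one_mul, neg_add_cancel]
    · simp

lemma pow_eq (g : SplitMetacyclic n m r) (k : ℕ) :
    g ^ k = ⟨g.x * ∑ t ∈ range k, (r ^ g.y.val) ^ t, k • g.y⟩ := by
  induction k with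
  | zero => ext <;> simp
  | succ k ih =>
    rw [pow_succ, ih]
    ext
    · simp only [mul_x, geom_sum_succ]; ring
    · simp only [mul_y, succ_nsmul]

@[simp] lemma pow_y (g : SplitMetacyclic n m r) (k : ℕ) : (g ^ k).y = k • g.y := by
  rw [pow_eq]

def genA : SplitMetacyclic n m r := ⟨1, 0⟩
def genB : SplitMetacyclic n m r := ⟨0, 1⟩

lemma genA_pow (k : ℕ) : (genA : SplitMetacyclic n m r) ^ k = ⟨k, 0⟩ := by
  simp [pow_eq, genA]

lemma genB_pow (k : ℕ) : (genB : SplitMetacyclic n m r) ^ k = ⟨0, k⟩ := by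
  simp [pow_eq, genB]

lemma genA_zpow (k : ℤ) : (genA : SplitMetacyclic n m r) ^ k = ⟨k, 0⟩ := by
  obtain ⟨k, rfl | rfl⟩ := Int.eq_nat_or_neg k
  · simp [genA_pow]
  · ext <;> simp [genA_pow]

lemma genB_zpow (k : ℤ) : (genB : SplitMetacyclic n m r) ^ k = ⟨0, k⟩ := by
  obtain ⟨k, rfl | rfl⟩ := Int.eq_nat_or_neg k
  · simp [genB_pow]
  · ext <;> simp [genB_pow]

lemma genB_pow_mul_genA_pow (y x : ℕ) :
    (genB : SplitMetacyclic n m r) ^ y * genA ^ x = ⟨x, y⟩ := by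
  ext <;> simp [genA_pow, genB_pow]

lemma genB_zpow_mul_genA_zpow (i j : ℤ) :
    (genB : SplitMetacyclic n m r) ^ i * genA ^ j = ⟨j, i⟩ := by
  ext <;> simp [genA_zpow, genB_zpow]

lemma mem_zpowers_genB_iff (g : SplitMetacyclic n m r) :
    g ∈ zpowers genB ↔ g.x = 0 := by
  refine ⟨?_, fun hx => ⟨g.y.val, ?_⟩⟩
  · rintro ⟨k, rfl⟩
    simp [genB_zpow]
  · ext <;> simp [genB_zpow, hx]

end SplitMetacyclic

abbrev M2Model (p d e f : ℕ) : Type := SplitMetacyclic (p ^ d) (p ^ e) (1 + (p : ZMod (p ^ d)) ^ f)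

namespace M2

open SplitMetacyclic

variable {p d e f : ℕ}

lemma a_pow_eq_one : M2a p d e f ^ p ^ d = 1 :=
  (map_pow _ _ _).symm.trans (PresentedGroup.one_of_mem (by simp [M2rels]))

lemma b_pow_eq_one : M2b p d e f ^ p ^ e = 1 :=
  (map_pow _ _ _).symm.trans (PresentedGroup.one_of_mem (by simp [M2rels]))

lemma a_mul_b : M2a p d e f * M2b p d e f = M2b p d e f * M2a p d e f ^ (1 + p ^ f) := by
  have h := PresentedGroup.one_of_mem (rels := M2rels p d e f)
    (x := (FreeGroup.of 1)⁻¹ * FreeGroup.of 0 * FreeGroup.of 1 * (FreeGroup.of 0 ^ (1 + p ^ f))⁻¹)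
    (by simp [M2rels])
  simp only [map_mul, map_inv, map_pow, mul_inv_eq_one] at h
  change (M2b p d e f)⁻¹ * M2a p d e f * M2b p d e f = M2a p d e f ^ (1 + p ^ f) at h
  rw [← h]
  group

variable [NeZero p] [hr : Fact ((1 + (p : ZMod (p ^ d)) ^ f) ^ p ^ e = 1)]

lemma lift_rels_eq_one :
    ∀ w ∈ M2rels p d e f, FreeGroup.lift (![genA, genB] : Fin 2 → M2Model p d e f) w = 1 := by
  simp only [M2rels, Set.mem_insert_iff, Set.mem_singleton_iff]
  rintro w (rfl | rfl | rfl)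
  · ext <;> simp [genA_pow]
  · ext <;> simp [genB_pow]
  · simp only [map_mul, map_inv, map_pow, FreeGroup.lift_apply_of, Matrix.cons_val_zero,
      Matrix.cons_val_one, mul_inv_eq_one, genA_pow]
    ext
    · simpa [genA, genB] using pow_zmod_val_natCast hr.out 1
    · simp [genA, genB]

def toModel : M2 p d e f →* M2Model p d e f := PresentedGroup.toGroup lift_rels_eq_one

def ofModel : M2Model p d e f →* M2 p d e f where
  toFun g := M2b p d e f ^ g.y.val * M2a p d e f ^ g.x.val
  map_one' := by simp
  map_mul' g h := by
    have hx : (g * h).x = ((g.x.val * (1 + p ^ f) ^ h.y.val + h.x.val : ℕ) : ZMod (p ^ d)) := by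
      simp only [mul_x, Nat.cast_add, Nat.cast_mul, ZMod.natCast_val, ZMod.cast_id', id_eq,
        Nat.cast_pow, Nat.cast_one, add_left_inj]
      ring
    have hy : (g * h).y = ((g.y.val + h.y.val : ℕ) : ZMod (p ^ e)) := by simp
    rw [hx, hy, pow_zmod_val_natCast a_pow_eq_one, pow_zmod_val_natCast b_pow_eq_one, pow_add,
      pow_add, pow_mul, mul_assoc, mul_assoc, ← mul_assoc (M2a p d e f ^ g.x.val),
      mul_pow_eq_pow_mul_pow_of_mul_eq a_mul_b, pow_mul]
    group

lemma toModel_a : toModel (M2a p d e f) = genA := PresentedGroup.toGroup.of _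

lemma toModel_b : toModel (M2b p d e f) = genB := PresentedGroup.toGroup.of _

def equivModel : M2 p d e f ≃* M2Model p d e f :=
  toModel.toMulEquiv ofModel
    (PresentedGroup.ext fun i => by
      fin_cases i
      · change ofModel (toModel (M2a p d e f)) = M2a p d e f
        simpa [toModel_a, ofModel, genA] using
          pow_zmod_val_natCast (a_pow_eq_one (e := e) (f := f)) 1
      · change ofModel (toModel (M2b p d e f)) = M2b p d e f
        simpa [toModel_b, ofModel, genB] using
          pow_zmod_val_natCast (b_pow_eq_one (d := d) (f := f)) 1)
    (MonoidHom.ext fun g => by simp [ofModel, toModel_a, toModel_b, genB_pow_mul_genA_pow])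

lemma equivModel_zpow_mul_zpow (i j : ℤ) :
    equivModel (M2b p d e f ^ i * M2a p d e f ^ j) = ⟨j, i⟩ := by
  change toModel (M2b p d e f ^ i * M2a p d e f ^ j) = _
  rw [map_mul, map_zpow, map_zpow, toModel_a, toModel_b, genB_zpow_mul_genA_zpow]

end M2

namespace SplitMetacyclic

variable {p d e f : ℕ} [hp : Fact p.Prime] [Fact ((1 + (p : ZMod (p ^ d)) ^ f) ^ p ^ e = 1)]

lemma mk_pow_x_eq_zero_iff (hodd : Odd p) (hf : 0 < f) (i j : ℤ) (n : ℕ) :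
    ((⟨j, i⟩ : M2Model p d e f) ^ n).x = 0 ↔ (p : ℤ) ^ d ∣ j * n := by
  set q := (1 + (p : ℤ) ^ f) ^ (i : ZMod (p ^ e)).val
  have hq : (p : ℤ) ∣ q - 1 :=
    (dvd_pow_self _ hf.ne').trans (by simpa using sub_one_dvd_pow_sub_one (1 + (p : ℤ) ^ f) _)
  have hx : ((⟨j, i⟩ : M2Model p d e f) ^ n).x =
      ((j * ∑ t ∈ range n, q ^ t : ℤ) : ZMod (p ^ d)) := by
    simp [pow_eq, q]
  rw [hx, ZMod.intCast_zmod_eq_zero_iff_dvd, ← pow_dvd_mul_geom_sum_iff hp.out hodd hq]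
  norm_cast

lemma mk_pow_y_eq_zero_iff (i j : ℤ) (n : ℕ) :
    ((⟨j, i⟩ : M2Model p d e f) ^ n).y = 0 ↔ (p : ℤ) ^ e ∣ n * i := by
  have hy : ((⟨j, i⟩ : M2Model p d e f) ^ n).y = ((n * i : ℤ) : ZMod (p ^ e)) := by simp [pow_eq]
  rw [hy, ZMod.intCast_zmod_eq_zero_iff_dvd]
  norm_cast

lemma mk_pow_eq_one_iff (hodd : Odd p) (hf : 0 < f) (i j : ℤ) (n : ℕ) :
    (⟨j, i⟩ : M2Model p d e f) ^ n = 1 ↔ (p : ℤ) ^ d ∣ j * n ∧ (p : ℤ) ^ e ∣ n * i := by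
  rw [SplitMetacyclic.ext_iff, one_x, one_y, mk_pow_x_eq_zero_iff hodd hf, mk_pow_y_eq_zero_iff]

lemma mk_pow_eq_one_iff_of_not_dvd (hodd : Odd p) (hf : 0 < f) (hde : d ≤ e) {i j : ℤ}
    (hi : (p : ℤ) ^ (e - d) ∣ i) (hj : ¬ (p : ℤ) ∣ j) (n : ℕ) :
    (⟨j, i⟩ : M2Model p d e f) ^ n = 1 ↔ (p : ℤ) ^ d ∣ n := by
  have hcop := isCoprime_pow_of_not_dvd hp.out hj d
  rw [mk_pow_eq_one_iff hodd hf]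
  refine ⟨fun h => hcop.dvd_of_dvd_mul_left h.1, fun h => ⟨h.mul_left j, ?_⟩⟩
  rw [← pow_mul_pow_sub (p : ℤ) hde]
  exact mul_dvd_mul h hi

lemma orderOf_mk_of_not_dvd (hodd : Odd p) (hf : 0 < f) (hde : d ≤ e) {i j : ℤ}
    (hi : (p : ℤ) ^ (e - d) ∣ i) (hj : ¬ (p : ℤ) ∣ j) :
    orderOf (⟨j, i⟩ : M2Model p d e f) = p ^ d :=
  Nat.dvd_right_iff_eq.mp fun n => by
    rw [orderOf_dvd_iff_pow_eq_one, mk_pow_eq_one_iff_of_not_dvd hodd hf hde hi hj]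
    exact_mod_cast Iff.rfl

lemma orderOf_mk_eq_iff (hodd : Odd p) (hf : 0 < f) (hde : d < e) (k l : ℤ) :
    orderOf (⟨l, k⟩ : M2Model p d e f) = p ^ e ↔ ¬ (p : ℤ) ∣ k := by
  refine ⟨fun hord ⟨k', hk'⟩ => ?_, fun hk => Nat.dvd_right_iff_eq.mp fun n => ?_⟩
  · have h : (⟨l, k⟩ : M2Model p d e f) ^ p ^ (e - 1) = 1 := by
      rw [mk_pow_eq_one_iff hodd hf, hk']
      push_cast
      refine ⟨(pow_dvd_pow _ (by omega)).mul_left l, ⟨k', ?_⟩⟩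
      rw [← mul_assoc, ← pow_succ, Nat.sub_add_cancel (by omega)]
    have := hord ▸ orderOf_dvd_of_pow_eq_one h
    rw [Nat.pow_dvd_pow_iff_le_right hp.out.one_lt] at this
    omega
  · have hcop := isCoprime_pow_of_not_dvd hp.out hk e
    rw [orderOf_dvd_iff_pow_eq_one, mk_pow_eq_one_iff hodd hf, ← Int.natCast_dvd_natCast]
    push_cast
    refine ⟨fun h => hcop.dvd_of_dvd_mul_right h.2, fun h => ⟨?_, h.mul_right k⟩⟩
    exact ((pow_dvd_pow _ hde.le).trans h).mul_left l

lemma zpowers_mk_inf_zpowers_genB_eq_bot (hodd : Odd p) (hf : 0 < f) (hde : d ≤ e) {i j : ℤ}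
    (hi : (p : ℤ) ^ (e - d) ∣ i) (hj : ¬ (p : ℤ) ∣ j) :
    zpowers (⟨j, i⟩ : M2Model p d e f) ⊓ zpowers genB = ⊥ := by
  have hcop := isCoprime_pow_of_not_dvd hp.out hj d
  refine eq_bot_iff.mpr fun g hg => ?_
  obtain ⟨hgα, hgB⟩ := mem_inf.mp hg
  obtain ⟨n, rfl⟩ := mem_powers_iff_mem_zpowers.mpr hgα
  rw [mem_zpowers_genB_iff, mk_pow_x_eq_zero_iff hodd hf] at hgB
  rw [mem_bot, mk_pow_eq_one_iff_of_not_dvd hodd hf hde hi hj]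
  exact hcop.dvd_of_dvd_mul_left hgB

lemma mk_pow_pow_mem_zpowers_genB (hodd : Odd p) (hf : 0 < f) {s : ℕ} (hds : d ≤ s)
    (k l : ℤ) : (⟨l, k⟩ : M2Model p d e f) ^ p ^ s ∈ zpowers genB := by
  rw [mem_zpowers_genB_iff, mk_pow_x_eq_zero_iff hodd hf]
  push_cast
  exact (pow_dvd_pow _ hds).mul_left l

lemma mk_pow_pow_mem_zpowers_mk (hodd : Odd p) (hf : 0 < f) (hd : 0 < d) (hde : d < e)
    {i j k l : ℤ} (hi : (p : ℤ) ^ (e - d) ∣ i) (hj : (p : ℤ) ∣ j) (hk : ¬ (p : ℤ) ∣ k) :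
    (⟨j, i⟩ : M2Model p d e f) ^ p ^ (d - 1) ∈ zpowers (⟨l, k⟩ : M2Model p d e f) := by
  obtain ⟨i', hi'⟩ := hi
  obtain ⟨u, v, huv⟩ := (Nat.prime_iff_prime_int.mp hp.out).coprime_iff_not_dvd.mpr hk
  have hpd : (p : ℤ) ^ d = p * p ^ (d - 1) := by rw [← pow_succ', Nat.sub_add_cancel hd]
  have hpe : (p : ℤ) ^ e = p ^ (e - 1) * p := by rw [← pow_succ, Nat.sub_add_cancel (by omega)]
  have hα : (⟨j, i⟩ : M2Model p d e f) ^ p ^ (d - 1) = genB ^ ((p : ℤ) ^ (e - 1) * i') := by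
    ext
    · rw [genB_zpow, mk_pow_x_eq_zero_iff hodd hf, hpd]
      push_cast
      exact mul_dvd_mul hj dvd_rfl
    · rw [genB_zpow, pow_y, nsmul_eq_mul, hi']
      push_cast
      rw [← mul_assoc, ← pow_add, show d - 1 + (e - d) = e - 1 by omega]
  have hβ : (⟨l, k⟩ : M2Model p d e f) ^ p ^ (e - 1) = genB ^ ((p : ℤ) ^ (e - 1) * k) := by
    ext
    · rw [genB_zpow]
      exact (mem_zpowers_genB_iff _).mp (mk_pow_pow_mem_zpowers_genB hodd hf (by omega) k l)
    · simp [genB_zpow, nsmul_eq_mul]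
  refine ⟨(p ^ (e - 1) : ℕ) * (v * i'), ?_⟩
  dsimp only
  rw [zpow_mul, zpow_natCast, hβ, ← zpow_mul, hα, genB_zpow, genB_zpow]
  congr 1
  rw [ZMod.intCast_eq_intCast_iff_dvd_sub]
  push_cast
  rw [hpe]
  exact ⟨i' * u, by linear_combination (-(p : ℤ) ^ (e - 1) * i') * huv⟩

theorem isExactBicyclicPair_mk_iff (hodd : Odd p) (hf : 0 < f) (hd : 0 < d) (hde : d < e)
    (i j k l : ℤ) :
    IsExactBicyclicPair (p ^ d) (p ^ e) (⟨j, i⟩ : M2Model p d e f) ⟨l, k⟩ ↔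
      (p : ℤ) ^ (e - d) ∣ i ∧ ¬ (p : ℤ) ∣ j * k := by
  rw [(Nat.prime_iff_prime_int.mp hp.out).dvd_mul, not_or]
  constructor
  · rintro ⟨hα, hβ, hαβ, -⟩
    have hi : (p : ℤ) ^ (e - d) ∣ i := by
      have h := ((mk_pow_eq_one_iff hodd hf i j (p ^ d)).mp (hα ▸ pow_orderOf_eq_one _)).2
      push_cast at h
      rwa [← pow_mul_pow_sub (p : ℤ) hde.le,
        mul_dvd_mul_iff_left (pow_ne_zero _ (Nat.cast_ne_zero.mpr hp.out.ne_zero))] at h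
    have hk := (orderOf_mk_eq_iff hodd hf hde k l).mp hβ
    refine ⟨hi, fun hj => ?_, hk⟩
    have hne : (⟨j, i⟩ : M2Model p d e f) ^ p ^ (d - 1) ≠ 1 :=
      pow_ne_one_of_lt_orderOf (pow_pos hp.out.pos _).ne'
        (by rw [hα]; exact Nat.pow_lt_pow_right hp.out.one_lt (by omega))
    refine hne (mem_bot.mp (hαβ ▸ mem_inf.mpr ⟨pow_mem (mem_zpowers _) _, ?_⟩))
    exact mk_pow_pow_mem_zpowers_mk hodd hf hd hde hi hj hk
  · rintro ⟨hi, hj, hk⟩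
    have hα := orderOf_mk_of_not_dvd hodd hf hde.le hi hj
    have hβ := (orderOf_mk_eq_iff hodd hf hde k l).mpr hk
    have hαβ := zpowers_inf_zpowers_eq_bot_of_pow_mem (e := e - 1)
      (by rwa [Nat.sub_add_cancel (by omega : 1 ≤ e)])
      (mk_pow_pow_mem_zpowers_genB hodd hf (by omega) k l)
      (zpowers_mk_inf_zpowers_genB_eq_bot hodd hf hde.le hi hj)
    exact ⟨hα, hβ, hαβ, exists_zpow_mul_zpow_of_orderOf_mul (by rw [hα, hβ, card_eq]) hαβ⟩

end SplitMetacyclic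

/-- For `G = M₂(p,d,e,f)` with `1 ≤ f < d < e` and canonical generators
`a, b`, and integers `i, j, k, l`, the pair `(bⁱaʲ, bᵏaˡ)` is an exact `(p^d,p^e)`-bicyclic
pair of `G` iff `p^(e-d) ∣ i` and `p ∤ jk`. -/
theorem stmt_7 (p d e f : ℕ) (hp : p.Prime) (hodd : Odd p)
    (hf : 0 < f) (hfd : f < d) (hde : d < e) (i j k l : ℤ) :
    IsExactBicyclicPair (p ^ d) (p ^ e)
        (M2b p d e f ^ i * M2a p d e f ^ j) (M2b p d e f ^ k * M2a p d e f ^ l) ↔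
      ((p : ℤ) ^ (e - d) ∣ i ∧ ¬ (p : ℤ) ∣ j * k) := by
  have : Fact p.Prime := ⟨hp⟩
  have : NeZero p := ⟨hp.ne_zero⟩
  have : Fact ((1 + (p : ZMod (p ^ d)) ^ f) ^ p ^ e = 1) :=
    ⟨one_add_pow_pow_eq_one_s7 hp hodd hf (by omega)⟩
  rw [← IsExactBicyclicPair.map_iff M2.equivModel, M2.equivModel_zpow_mul_zpow,
    M2.equivModel_zpow_mul_zpow]
  exact SplitMetacyclic.isExactBicyclicPair_mk_iff hodd hf (hf.trans hfd) hde i j k l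
end
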